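/- arXiv:1712.05372 — 8 statements merged into one kernel-verified Lean document; each statement's English description precedes it below -/
import Mathlib

section
/- Let b be continuous with 0 < b_min ≤ b ≤ b_max, μ > -liminf_{a→∞} b(a), and suppose ∫₀^∞ exp(-∫₀ˢ (μ+b(u))du) ds < ∞. Then lim_{s→∞} exp(-∫₀ˢ (μ + b(u)) du) = 0 and, for all a ≥ 0, e^{∫₀ᵃ(μ+b)} ∫_a^∞ b(s) e^{-∫₀ˢ(μ+b)} ds = 1 - μ ∫_a^∞ e^{-∫_a^s (μ+b(u))du} ds. -/
/-!
Write `g = μ + b` and `G_a(s) = ∫_a^s g`. Because `liminf g > 0`, `G_a` grows at least linearly,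
so `e^{-G_a} → 0`. As `-e^{-G_a}` is a primitive of `g e^{-G_a}`, this gives
`∫_a^∞ g e^{-G_a} = 1`; splitting `g = μ + b` and using `e^{G_0(a)} e^{-G_0(s)} = e^{-G_a(s)}`
turns this into the identity.
-/
open MeasureTheory Real Set Filter

theorem tendsto_intervalIntegral_atTop_of_eventually_ge {g : ℝ → ℝ} (hg : Continuous g) {c : ℝ}
    (hc : 0 < c) (hgc : ∀ᶠ u in atTop, c ≤ g u) (a : ℝ) :
    Tendsto (fun s => ∫ u in a..s, g u) atTop atTop := by
  obtain ⟨s₀, hs₀⟩ := eventually_atTop.1 hgc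
  have hlinear : Tendsto (fun s => (∫ u in a..s₀, g u) + c * (s - s₀)) atTop atTop :=
    tendsto_atTop_add_const_left _ _ <|
      (tendsto_atTop_add_const_right _ _ tendsto_id).const_mul_atTop hc
  refine tendsto_atTop_mono' _ ?_ hlinear
  filter_upwards [eventually_ge_atTop s₀] with s hs
  rw [← intervalIntegral.integral_add_adjacent_intervals (hg.intervalIntegrable a s₀)
    (hg.intervalIntegrable s₀ s)]
  have htail : ∫ _ in s₀..s, c ≤ ∫ u in s₀..s, g u :=
    intervalIntegral.integral_mono_on hs intervalIntegrable_const (hg.intervalIntegrable _ _)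
      fun u hu => hs₀ u hu.1
  rw [intervalIntegral.integral_const, smul_eq_mul] at htail
  linarith

theorem exp_integral_mul_exp_neg_integral {g : ℝ → ℝ} (hg : Continuous g) (a s : ℝ) :
    exp (∫ u in (0:ℝ)..a, g u) * exp (-∫ u in (0:ℝ)..s, g u) = exp (-∫ u in a..s, g u) := by
  rw [← exp_add, ← intervalIntegral.integral_interval_sub_left (hg.intervalIntegrable 0 s)
    (hg.intervalIntegrable 0 a)]
  congr 1
  ring

theorem integral_Ioi_mul_exp_neg_integral {g : ℝ → ℝ} (hg : Continuous g) (a : ℝ)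
    (hlim : Tendsto (fun s => exp (-∫ u in a..s, g u)) atTop (nhds 0))
    (hint : IntegrableOn (fun s => g s * exp (-∫ u in a..s, g u)) (Ioi a)) :
    ∫ s in Ioi a, g s * exp (-∫ u in a..s, g u) = 1 := by
  have hderiv : ∀ s ∈ Ici a, HasDerivAt (fun s => -exp (-∫ u in a..s, g u))
      (g s * exp (-∫ u in a..s, g u)) s := fun s _ => by
    simpa [mul_comm] using ((hg.integral_hasStrictDerivAt a s).hasDerivAt.fun_neg.exp).fun_neg
  rw [integral_Ioi_of_hasDerivAt_of_tendsto' hderiv hint hlim.neg]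
  simp

theorem exists_pos_eventually_le_const_add {b : ℝ → ℝ} {μ : ℝ}
    (hbdd : IsBoundedUnder (· ≥ ·) atTop b) (hμ : -liminf b atTop < μ) :
    ∃ c > 0, ∀ᶠ u in atTop, c ≤ μ + b u := by
  refine ⟨(μ + liminf b atTop) / 2, by linarith, ?_⟩
  filter_upwards [eventually_lt_of_lt_liminf (b := (liminf b atTop - μ) / 2) (by linarith) hbdd]
    with u hu
  linarith

theorem integral_Ioi_mul_exp_neg_integral_const_add {b : ℝ → ℝ} (hb : Continuous b) (μ a : ℝ)
    (hlim : Tendsto (fun s => exp (-∫ u in a..s, (μ + b u))) atTop (nhds 0))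
    (hE : IntegrableOn (fun s => exp (-∫ u in a..s, (μ + b u))) (Ioi a))
    (hbE : IntegrableOn (fun s => b s * exp (-∫ u in a..s, (μ + b u))) (Ioi a)) :
    ∫ s in Ioi a, b s * exp (-∫ u in a..s, (μ + b u))
      = 1 - μ * ∫ s in Ioi a, exp (-∫ u in a..s, (μ + b u)) := by
  have hgE : IntegrableOn (fun s => (μ + b s) * exp (-∫ u in a..s, (μ + b u))) (Ioi a) :=
    IntegrableOn.congr_fun ((hE.const_mul μ).fun_add hbE) (fun s _ => by ring) measurableSet_Ioi
  rw [← integral_Ioi_mul_exp_neg_integral (g := fun u => μ + b u) (continuous_const.add hb) a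
    hlim hgE, ← integral_const_mul, ← integral_sub hgE (hE.const_mul μ)]
  exact setIntegral_congr_fun measurableSet_Ioi fun s _ => by ring

theorem stmt_6_general (b : ℝ → ℝ) (bmin bmax : ℝ) (hb : Continuous b)
    (hbd : ∀ a : ℝ, 0 ≤ a → bmin ≤ b a ∧ b a ≤ bmax)
    (μ : ℝ) (hμ : -Filter.liminf b Filter.atTop < μ)
    (hint : MeasureTheory.IntegrableOn
      (fun s => Real.exp (-(∫ u in (0:ℝ)..s, (μ + b u)))) (Set.Ioi (0:ℝ))) :
    Filter.Tendsto (fun s => Real.exp (-(∫ u in (0:ℝ)..s, (μ + b u))))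
      Filter.atTop (nhds 0) ∧
    ∀ a : ℝ, 0 ≤ a →
      Real.exp (∫ u in (0:ℝ)..a, (μ + b u)) *
        (∫ s in Set.Ioi a, b s * Real.exp (-(∫ u in (0:ℝ)..s, (μ + b u))))
      = 1 - μ * ∫ s in Set.Ioi a, Real.exp (-(∫ u in a..s, (μ + b u))) := by
  have hg : Continuous fun u => μ + b u := continuous_const.add hb
  have hbdd : IsBoundedUnder (· ≥ ·) atTop b :=
    ⟨bmin, eventually_map.2 <| eventually_atTop.2 ⟨0, fun u hu => (hbd u hu).1⟩⟩
  obtain ⟨c, hc, hgc⟩ := exists_pos_eventually_le_const_add hbdd hμ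
  have hdecay : ∀ a : ℝ, Tendsto (fun s => exp (-∫ u in a..s, (μ + b u))) atTop (nhds 0) :=
    fun a => tendsto_exp_neg_atTop_nhds_zero.comp
      (tendsto_intervalIntegral_atTop_of_eventually_ge hg hc hgc a)
  refine ⟨hdecay 0, fun a ha => ?_⟩
  have hE : IntegrableOn (fun s => exp (-∫ u in a..s, (μ + b u))) (Ioi a) :=
    IntegrableOn.congr_fun ((hint.mono_set (Ioi_subset_Ioi ha)).const_mul _)
      (fun s _ => exp_integral_mul_exp_neg_integral hg a s) measurableSet_Ioi
  have hbE : IntegrableOn (fun s => b s * exp (-∫ u in a..s, (μ + b u))) (Ioi a) := by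
    refine hE.bdd_mul (c := max |bmin| |bmax|) hb.aestronglyMeasurable ?_
    filter_upwards [self_mem_ae_restrict measurableSet_Ioi] with s hs
    obtain ⟨hlo, hhi⟩ := hbd s (ha.trans hs.le)
    exact abs_le_max_abs_abs hlo hhi
  rw [← integral_Ioi_mul_exp_neg_integral_const_add hb μ a (hdecay a) hE hbE,
    ← integral_const_mul]
  refine setIntegral_congr_fun measurableSet_Ioi fun s _ => ?_
  rw [← exp_integral_mul_exp_neg_integral hg a s]
  ring

/-- Integration-by-parts identity for the per-layer dual eigenfunction:
`exp(-∫₀ˢ(μ+b)) → 0` as `s → ∞`, and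
`e^{∫₀ᵃ(μ+b)} ∫_a^∞ b(s) e^{-∫₀ˢ(μ+b)} ds = 1 - μ ∫_a^∞ e^{-∫_a^s(μ+b)} ds`. -/
theorem stmt_6 (b : ℝ → ℝ) (bmin bmax : ℝ) (hb : Continuous b)
    (hmin : 0 < bmin) (hbd : ∀ a : ℝ, 0 ≤ a → bmin ≤ b a ∧ b a ≤ bmax)
    (μ : ℝ) (hμ : -Filter.liminf b Filter.atTop < μ)
    (hint : MeasureTheory.IntegrableOn
      (fun s => Real.exp (-(∫ u in (0:ℝ)..s, (μ + b u)))) (Set.Ioi (0:ℝ))) :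
    Filter.Tendsto (fun s => Real.exp (-(∫ u in (0:ℝ)..s, (μ + b u))))
      Filter.atTop (nhds 0) ∧
    ∀ a : ℝ, 0 ≤ a →
      Real.exp (∫ u in (0:ℝ)..a, (μ + b u)) *
        (∫ s in Set.Ioi a, b s * Real.exp (-(∫ u in (0:ℝ)..s, (μ + b u))))
      = 1 - μ * ∫ s in Set.Ioi a, Real.exp (-(∫ u in a..s, (μ + b u))) :=
  stmt_6_general b bmin bmax hb hbd μ hμ hint
end

section
/- Let μ < 0, b continuous with b_min ≤ b ≤ b_max, and suppose there exist A > 0 and ε > 0 such that μ + b(a) > ε for all a ≥ A. Then the function a ↦ ∫_a^∞ b(s) exp(-∫_a^s (μ + b(u)) du) ds is bounded on [0,∞), with bound 1 + |μ|/ε for a ≥ A. -/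
/-!
Write `w_a(s) = exp (-∫_a^s (μ + b))`. Since `μ + b ≥ μ + bmin` on `[0, ∞)` and `μ + b > ε`
on `[A, ∞)`, the exponent is at least `ε (s - a)` minus a constant independent of `a ≥ 0`, so
`w_a` is dominated by a uniform multiple of `exp (-ε (s - a))`; as `b` is bounded, this bounds
the integral uniformly. For `a ≥ A`, writing `b = (μ + b) - μ` splits the integral into
`∫_a^∞ (μ + b) w_a = 1`, since the integrand is the derivative of `-w_a`, and
`-μ ∫_a^∞ w_a ≤ |μ| / ε`.
-/

open MeasureTheory Real Set Filter Topology

section ExpNegPrimitive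

variable {g : ℝ → ℝ} {a c ε : ℝ}

lemma mul_sub_le_intervalIntegral_of_le {t s : ℝ} (hg : IntervalIntegrable g volume t s)
    (hts : t ≤ s) (h : ∀ x ∈ Ioo t s, c ≤ g x) : c * (s - t) ≤ ∫ u in t..s, g u := by
  simpa [mul_comm] using
    intervalIntegral.integral_mono_on_of_le_Ioo hts intervalIntegrable_const hg h

/-- The deficit `ε - m` is only paid on `[a, s] ∩ [0, A]`, an interval of length at most `A`. -/
lemma sub_le_intervalIntegral_of_le_of_tail {m A s : ℝ} (hg : Continuous g)
    (hm : ∀ x, 0 ≤ x → m ≤ g x) (htail : ∀ x, A ≤ x → ε ≤ g x) (hmε : m ≤ ε) (hA : 0 ≤ A)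
    (ha : 0 ≤ a) (has : a ≤ s) : ε * (s - a) - (ε - m) * A ≤ ∫ u in a..s, g u := by
  have low : ∀ t r, 0 ≤ t → t ≤ r → m * (r - t) ≤ ∫ u in t..r, g u := fun t r ht htr =>
    mul_sub_le_intervalIntegral_of_le (hg.intervalIntegrable _ _) htr
      fun x hx => hm x (ht.trans hx.1.le)
  have high : ∀ t r, A ≤ t → t ≤ r → ε * (r - t) ≤ ∫ u in t..r, g u := fun t r ht htr =>
    mul_sub_le_intervalIntegral_of_le (hg.intervalIntegrable _ _) htr
      fun x hx => htail x (ht.trans hx.1.le)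
  have hεm : 0 ≤ ε - m := sub_nonneg.2 hmε
  rcases le_total A a with hAa | haA
  · nlinarith [high a s hAa has, mul_nonneg hεm hA]
  rcases le_total s A with hsA | hAs
  · nlinarith [low a s ha has, mul_le_mul_of_nonneg_left (show s - a ≤ A by linarith) hεm]
  · rw [← intervalIntegral.integral_add_adjacent_intervals (hg.intervalIntegrable a A)
      (hg.intervalIntegrable A s)]
    nlinarith [low a A ha haA, high A s le_rfl hAs,
      mul_le_mul_of_nonneg_left (show A - a ≤ A by linarith) hεm]

lemma hasDerivAt_neg_exp_neg_intervalIntegral (hg : Continuous g) (x : ℝ) :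
    HasDerivAt (fun s => -exp (-∫ u in a..s, g u)) (g x * exp (-∫ u in a..x, g u)) x :=
  (hg.integral_hasStrictDerivAt a x).hasDerivAt.fun_neg.exp.fun_neg.congr_deriv (by ring)

lemma exp_neg_intervalIntegral_le (hlow : ∀ s, a ≤ s → ε * (s - a) - c ≤ ∫ u in a..s, g u)
    {s : ℝ} (has : a ≤ s) : exp (-∫ u in a..s, g u) ≤ exp (c + ε * a) * exp (-ε * s) := by
  rw [← exp_add, exp_le_exp]
  nlinarith [hlow s has]

lemma integrableOn_exp_neg_intervalIntegral (hg : Continuous g) (hε : 0 < ε)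
    (hlow : ∀ s, a ≤ s → ε * (s - a) - c ≤ ∫ u in a..s, g u) :
    IntegrableOn (fun s => exp (-∫ u in a..s, g u)) (Ioi a) :=
  ((integrableOn_exp_mul_Ioi (neg_lt_zero.2 hε) a).const_mul _).mono'
    ((intervalIntegral.continuous_primitive (fun _ _ => hg.intervalIntegrable _ _) a).fun_neg.rexp
      |>.aestronglyMeasurable)
    (ae_restrict_of_forall_mem measurableSet_Ioi fun s hs => by
      rw [norm_of_nonneg (exp_pos _).le]
      exact exp_neg_intervalIntegral_le hlow (le_of_lt hs))

lemma integral_exp_neg_intervalIntegral_le (hg : Continuous g) (hε : 0 < ε)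
    (hlow : ∀ s, a ≤ s → ε * (s - a) - c ≤ ∫ u in a..s, g u) :
    ∫ s in Ioi a, exp (-∫ u in a..s, g u) ≤ exp c / ε := by
  calc ∫ s in Ioi a, exp (-∫ u in a..s, g u)
      ≤ ∫ s in Ioi a, exp (c + ε * a) * exp (-ε * s) :=
        setIntegral_mono_on (integrableOn_exp_neg_intervalIntegral hg hε hlow)
          ((integrableOn_exp_mul_Ioi (neg_lt_zero.2 hε) a).const_mul _) measurableSet_Ioi
          fun s hs => exp_neg_intervalIntegral_le hlow (le_of_lt hs)
    _ = exp c / ε := by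
        rw [integral_const_mul, integral_exp_mul_Ioi (neg_lt_zero.2 hε), neg_div_neg_eq,
          ← mul_div_assoc, ← exp_add]
        ring_nf

lemma abs_integral_mul_exp_neg_intervalIntegral_le {f : ℝ → ℝ} {M : ℝ} (hg : Continuous g)
    (hε : 0 < ε) (hlow : ∀ s, a ≤ s → ε * (s - a) - c ≤ ∫ u in a..s, g u)
    (hf : ∀ s ∈ Ioi a, |f s| ≤ M) :
    |∫ s in Ioi a, f s * exp (-∫ u in a..s, g u)| ≤ M * (exp c / ε) := by
  have hM : 0 ≤ M := (abs_nonneg _).trans (hf (a + 1) (by simp))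
  rw [← norm_eq_abs]
  calc ‖∫ s in Ioi a, f s * exp (-∫ u in a..s, g u)‖
      ≤ ∫ s in Ioi a, M * exp (-∫ u in a..s, g u) :=
        norm_integral_le_of_norm_le ((integrableOn_exp_neg_intervalIntegral hg hε hlow).const_mul M)
          (ae_restrict_of_forall_mem measurableSet_Ioi fun s hs => by
            rw [norm_mul, norm_of_nonneg (exp_pos _).le, norm_eq_abs]
            exact mul_le_mul_of_nonneg_right (hf s hs) (exp_pos _).le)
    _ = M * ∫ s in Ioi a, exp (-∫ u in a..s, g u) := integral_const_mul _ _
    _ ≤ M * (exp c / ε) :=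
        mul_le_mul_of_nonneg_left (integral_exp_neg_intervalIntegral_le hg hε hlow) hM

lemma tendsto_intervalIntegral_atTop (hε : 0 < ε)
    (hlow : ∀ s, a ≤ s → ε * (s - a) - c ≤ ∫ u in a..s, g u) :
    Tendsto (fun s => ∫ u in a..s, g u) atTop atTop :=
  tendsto_atTop_mono' _ ((eventually_ge_atTop a).mono fun s hs => by
      show ε * s + -(ε * a + c) ≤ _
      linarith [hlow s hs])
    (tendsto_atTop_add_const_right _ _ (tendsto_id.const_mul_atTop hε))

lemma tendsto_neg_exp_neg_intervalIntegral_atTop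
    (htop : Tendsto (fun s => ∫ u in a..s, g u) atTop atTop) :
    Tendsto (fun s => -exp (-∫ u in a..s, g u)) atTop (𝓝 0) := by
  simpa using (tendsto_exp_neg_atTop_nhds_zero.comp htop).neg

lemma integrableOn_mul_exp_neg_intervalIntegral (hg : Continuous g)
    (hpos : ∀ x ∈ Ioi a, 0 ≤ g x) (htop : Tendsto (fun s => ∫ u in a..s, g u) atTop atTop) :
    IntegrableOn (fun s => g s * exp (-∫ u in a..s, g u)) (Ioi a) :=
  integrableOn_Ioi_deriv_of_nonneg' (fun x _ => hasDerivAt_neg_exp_neg_intervalIntegral hg x)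
    (fun x hx => mul_nonneg (hpos x hx) (exp_pos _).le)
    (tendsto_neg_exp_neg_intervalIntegral_atTop htop)

lemma integral_mul_exp_neg_intervalIntegral_eq_one (hg : Continuous g)
    (hpos : ∀ x ∈ Ioi a, 0 ≤ g x) (htop : Tendsto (fun s => ∫ u in a..s, g u) atTop atTop) :
    ∫ s in Ioi a, g s * exp (-∫ u in a..s, g u) = 1 := by
  rw [integral_Ioi_of_hasDerivAt_of_nonneg'
    (fun x _ => hasDerivAt_neg_exp_neg_intervalIntegral hg x) (fun x hx => mul_nonneg (hpos x hx) (exp_pos _).le)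
    (tendsto_neg_exp_neg_intervalIntegral_atTop htop)]
  simp

lemma integral_sub_mul_exp_neg_intervalIntegral_le (hg : Continuous g) (hε : 0 < ε)
    (hlow : ∀ s, a ≤ s → ε * (s - a) - c ≤ ∫ u in a..s, g u) (hpos : ∀ x ∈ Ioi a, 0 ≤ g x)
    (d : ℝ) : ∫ s in Ioi a, (g s - d) * exp (-∫ u in a..s, g u) ≤ 1 + |d| * (exp c / ε) := by
  have hw := integrableOn_exp_neg_intervalIntegral hg hε hlow
  have htop := tendsto_intervalIntegral_atTop hε hlow
  have hw_nonneg : 0 ≤ ∫ s in Ioi a, exp (-∫ u in a..s, g u) :=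
    setIntegral_nonneg measurableSet_Ioi fun _ _ => (exp_pos _).le
  simp_rw [sub_mul]
  rw [integral_sub (integrableOn_mul_exp_neg_intervalIntegral hg hpos htop) (hw.const_mul d),
    integral_mul_exp_neg_intervalIntegral_eq_one hg hpos htop, integral_const_mul, sub_eq_add_neg,
    ← neg_mul]
  gcongr 1 + ?_
  calc -d * ∫ s in Ioi a, exp (-∫ u in a..s, g u)
      ≤ |d| * ∫ s in Ioi a, exp (-∫ u in a..s, g u) :=
        mul_le_mul_of_nonneg_right (neg_le_abs d) hw_nonneg
    _ ≤ |d| * (exp c / ε) :=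
        mul_le_mul_of_nonneg_left (integral_exp_neg_intervalIntegral_le hg hε hlow) (abs_nonneg d)

end ExpNegPrimitive

theorem stmt_7_general (b : ℝ → ℝ) (bmin bmax : ℝ) (hb : Continuous b)
    (hbd : ∀ a : ℝ, 0 ≤ a → bmin ≤ b a ∧ b a ≤ bmax)
    (μ A ε : ℝ) (hA : 0 < A) (hε : 0 < ε)
    (htail : ∀ a : ℝ, A ≤ a → ε < μ + b a) :
    (∃ C : ℝ, ∀ a : ℝ, 0 ≤ a →
      |∫ s in Set.Ioi a, b s * Real.exp (-(∫ u in a..s, (μ + b u)))| ≤ C) ∧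
    (∀ a : ℝ, A ≤ a →
      (∫ s in Set.Ioi a, b s * Real.exp (-(∫ u in a..s, (μ + b u))))
        ≤ 1 + |μ| / ε) := by
  have hg : Continuous fun u => μ + b u := continuous_const.add hb
  have hlow_tail : ∀ a, A ≤ a → ∀ s, a ≤ s → ε * (s - a) - 0 ≤ ∫ u in a..s, (μ + b u) :=
    fun a ha s has => by
      simpa using mul_sub_le_intervalIntegral_of_le (hg.intervalIntegrable a s) has
        fun x hx => (htail x (ha.trans hx.1.le)).le
  refine ⟨⟨max |bmin| |bmax| * (exp ((ε - min (μ + bmin) ε) * A) / ε), fun a ha => ?_⟩,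
    fun a ha => ?_⟩
  · refine abs_integral_mul_exp_neg_intervalIntegral_le hg hε
      (fun s has => sub_le_intervalIntegral_of_le_of_tail hg (fun x hx => ?_)
        (fun x hx => (htail x hx).le) (min_le_right _ _) hA.le ha has) fun s hs => ?_
    · exact (min_le_left _ _).trans (by linarith [(hbd x hx).1])
    · obtain ⟨hmin, hmax⟩ := hbd s (ha.trans (le_of_lt hs))
      exact abs_le_max_abs_abs hmin hmax
  · simpa only [add_sub_cancel_left, exp_zero, mul_div_assoc', mul_one] using
      integral_sub_mul_exp_neg_intervalIntegral_le hg hε (hlow_tail a ha)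
        (fun x hx => (hε.trans (htail x (ha.trans (le_of_lt hx)))).le) μ

/-- Boundedness of the per-layer dual eigenfunction for negative intrinsic
growth rate: if `μ < 0` and `μ + b(a) > ε` for `a ≥ A`, then
`a ↦ ∫_a^∞ b(s) exp(-∫_a^s (μ + b(u)) du) ds` is bounded on `[0,∞)`, with
bound `1 + |μ|/ε` for `a ≥ A`. -/
theorem stmt_7 (b : ℝ → ℝ) (bmin bmax : ℝ) (hb : Continuous b)
    (hbd : ∀ a : ℝ, 0 ≤ a → bmin ≤ b a ∧ b a ≤ bmax)
    (μ A ε : ℝ) (hμ : μ < 0) (hA : 0 < A) (hε : 0 < ε)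
    (htail : ∀ a : ℝ, A ≤ a → ε < μ + b a) :
    (∃ C : ℝ, ∀ a : ℝ, 0 ≤ a →
      |∫ s in Set.Ioi a, b s * Real.exp (-(∫ u in a..s, (μ + b u)))| ≤ C) ∧
    (∀ a : ℝ, A ≤ a →
      (∫ s in Set.Ioi a, b s * Real.exp (-(∫ u in a..s, (μ + b u))))
        ≤ 1 + |μ| / ε) :=
  stmt_7_general b bmin bmax hb hbd μ A ε hA hε htail
end

section
/- Suppose F : [0,∞) → ℝ is differentiable and satisfies F'(t) ≤ Σ_{i=1}^N P_i(t) e^{-κ_i t} - γ F(t), where γ > 0, κ_i > 0 and each P_i is a polynomial of degree α_i. Then there exist a constant K and polynomials Q_i of degree at most α_i + 1 such that F(t) ≤ K e^{-γ t} + Σ_{i=1}^N Q_i(t) e^{-κ_i t} for all t ≥ 0. -/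
/-!
Solve `Qᵢ' + (γ - κᵢ) Qᵢ = Pᵢ` in polynomials: for `κᵢ ≠ γ` by `Qᵢ = (γ - κᵢ)⁻¹ (Pᵢ - Rᵢ)` with
`Rᵢ` the solution for `Pᵢ'`, which keeps the degree, and for `κᵢ = γ` by an antiderivative, which
raises it by one. Then `G t = Σᵢ Qᵢ(t) e^{(γ - κᵢ) t}` is a primitive of the source term times
`e^{γ t}`, so `F e^{γ t} - G` has nonpositive derivative on `[0, ∞)` and stays below its value at
`0`; this is the claim with `K = F 0 - G 0`.
-/

open Real Polynomial Finset

namespace Polynomial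

variable {K : Type*} [Field K]

theorem exists_derivative_eq [CharZero K] (P : K[X]) :
    ∃ Q : K[X], Q.natDegree ≤ P.natDegree + 1 ∧ derivative Q = P := by
  refine ⟨∑ i ∈ range (P.natDegree + 1), C (P.coeff i / (i + 1)) * X ^ (i + 1), ?_, ?_⟩
  · refine natDegree_sum_le_of_forall_le _ _ fun i hi => (natDegree_C_mul_le _ _).trans ?_
    rw [natDegree_X_pow]
    exact Nat.succ_le_succ (Nat.lt_succ_iff.mp (mem_range.mp hi))
  · conv_rhs => rw [P.as_sum_range' (P.natDegree + 1) (Nat.lt_succ_self _)]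
    rw [derivative_sum]
    refine sum_congr rfl fun i _ => ?_
    rw [derivative_C_mul_X_pow, ← C_mul_X_pow_eq_monomial]
    push_cast
    rw [div_mul_cancel₀ _ (Nat.cast_add_one_ne_zero i)]

theorem exists_natDegree_le_derivative_add_C_mul_eq {c : K} (hc : c ≠ 0) (P : K[X]) :
    ∃ Q : K[X], Q.natDegree ≤ P.natDegree ∧ derivative Q + C c * Q = P := by
  have lift : ∀ P R : K[X], derivative R + C c * R = derivative P →
      derivative (C c⁻¹ * (P - R)) + C c * (C c⁻¹ * (P - R)) = P := by
    intro P R hR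
    have hcc : C c * C c⁻¹ = (1 : K[X]) := by rw [← C_mul, mul_inv_cancel₀ hc, C_1]
    rw [derivative_C_mul, derivative_sub]
    linear_combination -C c⁻¹ * hR + P * hcc
  suffices ∀ n (P : K[X]), P.natDegree ≤ n →
      ∃ Q : K[X], Q.natDegree ≤ n ∧ derivative Q + C c * Q = P from this _ P le_rfl
  intro n
  induction n with
  | zero =>
    intro P hP
    have hP' : derivative P = 0 := by rw [eq_C_of_natDegree_le_zero hP, derivative_C]
    exact ⟨C c⁻¹ * (P - 0), (natDegree_C_mul_le _ _).trans (by simpa using hP),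
      lift P 0 (by simp [hP'])⟩
  | succ n ih =>
    intro P hP
    obtain ⟨R, hRdeg, hR⟩ := ih (derivative P) ((natDegree_derivative_le P).trans (by omega))
    refine ⟨C c⁻¹ * (P - R), (natDegree_C_mul_le _ _).trans ?_, lift P R hR⟩
    exact (natDegree_sub_le _ _).trans (max_le hP (hRdeg.trans n.le_succ))

theorem exists_derivative_add_C_mul_eq [CharZero K] (c : K) (P : K[X]) :
    ∃ Q : K[X], Q.natDegree ≤ P.natDegree + 1 ∧ derivative Q + C c * Q = P := by
  rcases eq_or_ne c 0 with rfl | hc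
  · simpa using exists_derivative_eq P
  · obtain ⟨Q, hdeg, hQ⟩ := exists_natDegree_le_derivative_add_C_mul_eq hc P
    exact ⟨Q, hdeg.trans P.natDegree.le_succ, hQ⟩

end Polynomial

theorem hasDerivAt_eval_mul_exp {P Q : ℝ[X]} {c : ℝ} (hQ : derivative Q + C c * Q = P)
    (t : ℝ) : HasDerivAt (fun s => Q.eval s * exp (c * s)) (P.eval t * exp (c * t)) t := by
  refine ((Q.hasDerivAt t).fun_mul ((hasDerivAt_const_mul c).exp)).congr_deriv ?_
  rw [← hQ, eval_add, eval_mul, eval_C]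
  ring

theorem le_of_hasDerivAt_le_sub_mul {F F' g G : ℝ → ℝ} {γ : ℝ}
    (hF : ∀ t, 0 ≤ t → HasDerivAt F (F' t) t)
    (hG : ∀ t, 0 ≤ t → HasDerivAt G (g t * exp (γ * t)) t)
    (hineq : ∀ t, 0 ≤ t → F' t ≤ g t - γ * F t) {t : ℝ} (ht : 0 ≤ t) :
    F t ≤ (F 0 - G 0) * exp (-(γ * t)) + G t * exp (-(γ * t)) := by
  set H : ℝ → ℝ := fun s => F s * exp (γ * s) - G s
  set H' : ℝ → ℝ := fun s => (F' s + γ * F s - g s) * exp (γ * s)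
  have hH : ∀ s, 0 ≤ s → HasDerivAt H (H' s) s := fun s hs =>
    (((hF s hs).fun_mul (hasDerivAt_const_mul γ).exp).fun_sub (hG s hs)).congr_deriv (by ring)
  have hanti : AntitoneOn H (Set.Ici 0) := by
    refine antitoneOn_of_hasDerivWithinAt_nonpos (f' := H') (convex_Ici 0)
      (fun s hs => (hH s hs).continuousAt.continuousWithinAt) (fun s hs => ?_) (fun s hs => ?_)
    all_goals rw [interior_Ici] at hs
    · exact (hH s hs.le).hasDerivWithinAt
    · exact mul_nonpos_of_nonpos_of_nonneg (by linarith [hineq s hs.le]) (exp_pos _).le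
  have hHt : H t ≤ H 0 := hanti Set.self_mem_Ici ht ht
  have hexp : exp (γ * t) * exp (-(γ * t)) = 1 := by rw [← exp_add, add_neg_cancel, exp_zero]
  simp only [H, mul_zero, exp_zero, mul_one] at hHt
  calc F t = (F t * exp (γ * t)) * exp (-(γ * t)) := by rw [mul_assoc, hexp, mul_one]
    _ ≤ (F 0 - G 0 + G t) * exp (-(γ * t)) := by gcongr; linarith
    _ = _ := add_mul _ _ _

theorem stmt_8_general (N : ℕ) (F F' : ℝ → ℝ) (γ : ℝ)
    (κ : Fin N → ℝ)
    (P : Fin N → Polynomial ℝ)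
    (hF : ∀ t : ℝ, 0 ≤ t → HasDerivAt F (F' t) t)
    (hineq : ∀ t : ℝ, 0 ≤ t →
      F' t ≤ (∑ i, (P i).eval t * Real.exp (-(κ i * t))) - γ * F t) :
    ∃ (K : ℝ) (Q : Fin N → Polynomial ℝ),
      (∀ i, (Q i).natDegree ≤ (P i).natDegree + 1) ∧
      ∀ t : ℝ, 0 ≤ t →
        F t ≤ K * Real.exp (-(γ * t)) +
          ∑ i, (Q i).eval t * Real.exp (-(κ i * t)) := by
  choose Q hQdeg hQ using fun i => exists_derivative_add_C_mul_eq (γ - κ i) (P i)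
  have hexp : ∀ i t, exp ((γ - κ i) * t) = exp (-(κ i * t)) * exp (γ * t) := fun i t => by
    rw [← exp_add]; ring_nf
  set G : ℝ → ℝ := fun t => ∑ i, (Q i).eval t * exp ((γ - κ i) * t)
  have hG : ∀ t, 0 ≤ t → HasDerivAt G ((∑ i, (P i).eval t * exp (-(κ i * t))) * exp (γ * t)) t :=
    fun t _ => (HasDerivAt.fun_sum fun i _ => hasDerivAt_eval_mul_exp (hQ i) t).congr_deriv <| by
      simp only [sum_mul, mul_assoc, hexp]
  refine ⟨F 0 - G 0, Q, hQdeg, fun t ht => ?_⟩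
  convert le_of_hasDerivAt_le_sub_mul hF hG hineq ht using 2
  simp only [G, sum_mul, mul_assoc, hexp, ← exp_add, add_neg_cancel_right]

/-- Modified Grönwall lemma: if `F' ≤ Σᵢ Pᵢ(t) e^{-κᵢ t} - γ F`, then
`F(t) ≤ K e^{-γ t} + Σᵢ Qᵢ(t) e^{-κᵢ t}` with `deg Qᵢ ≤ deg Pᵢ + 1`. -/
theorem stmt_8 (N : ℕ) (F F' : ℝ → ℝ) (γ : ℝ) (hγ : 0 < γ)
    (κ : Fin N → ℝ) (hκ : ∀ i, 0 < κ i)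
    (P : Fin N → Polynomial ℝ)
    (hF : ∀ t : ℝ, 0 ≤ t → HasDerivAt F (F' t) t)
    (hineq : ∀ t : ℝ, 0 ≤ t →
      F' t ≤ (∑ i, (P i).eval t * Real.exp (-(κ i * t))) - γ * F t) :
    ∃ (K : ℝ) (Q : Fin N → Polynomial ℝ),
      (∀ i, (Q i).natDegree ≤ (P i).natDegree + 1) ∧
      ∀ t : ℝ, 0 ≤ t →
        F t ≤ K * Real.exp (-(γ * t)) +
          ∑ i, (Q i).eval t * Real.exp (-(κ i * t)) :=
  stmt_8_general N F F' γ κ P hF hineq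
end

section
/- Let J ≥ 1, and for j = 1,…,J let λ_j be pairwise distinct reals and c_j ≠ 0 reals. Consider the lower bidiagonal matrix A ∈ ℝ^{J×J} with A_{jj} = λ_j and A_{j+1,j} = c_j. Let M(t) = e^{tA} M(0) with M(0) = (N, 0, …, 0), N > 0. If u ∈ ℝ^J satisfies uᵀ M(t) = 0 for all t ≥ 0, then u = 0. -/
open Matrix Set Filter Topology

/-!
Since `t ↦ uᵀ e^{tA} v` and all its derivatives `t ↦ uᵀ e^{tA} Aᵏ v` vanish on `[0, ∞)`, evaluating
at `t = 0` gives `uᵀ Aᵏ v = 0` for every `k`. For `v = (N, 0, …, 0)` and `A` lower Hessenberg with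
nonzero subdiagonal (in particular lower bidiagonal with `c_j ≠ 0`), the Krylov vector `Aᵏ v` is
supported on the first `k + 1` coordinates, with `k`-th coordinate `N c₀ ⋯ c_{k-1} ≠ 0`. The Krylov
matrix with columns `v, Av, …, Aⁿv` is therefore upper triangular with nonzero diagonal, and `u`,
being orthogonal to all its columns, vanishes.
-/

theorem eqOn_zero_Ici_of_hasDerivAt {f f' : ℝ → ℝ} {a : ℝ} (hf : ∀ t, HasDerivAt f (f' t) t)
    (hf' : Continuous f') (h : EqOn f 0 (Ici a)) : EqOn f' 0 (Ici a) := by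
  have hIoi : EqOn f' 0 (Ioi a) := fun t ht => by
    have hloc : f =ᶠ[𝓝 t] fun _ => 0 :=
      eventually_of_mem (Ioi_mem_nhds ht) fun s hs => h (Ioi_subset_Ici_self hs)
    exact (hf t).unique ((hasDerivAt_const t 0).congr_of_eventuallyEq hloc)
  exact hIoi.of_subset_closure hf'.continuousOn continuousOn_const Ioi_subset_Ici_self
    (closure_Ioi a).ge

section MatrixExp

-- `NormedSpace.exp` depends only on the topology, so any normed-algebra structure on matrices does.
attribute [local instance] Matrix.linftyOpNormedRing Matrix.linftyOpNormedAlgebra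

variable {m : Type*} [Fintype m] [DecidableEq m]

theorem hasDerivAt_dotProduct_exp_smul_mulVec (A : Matrix m m ℝ) (u w : m → ℝ) (t : ℝ) :
    HasDerivAt (fun s : ℝ => u ⬝ᵥ (NormedSpace.exp (s • A) *ᵥ w))
      (u ⬝ᵥ (NormedSpace.exp (t • A) *ᵥ (A *ᵥ w))) t := by
  let L : Matrix m m ℝ →ₗ[ℝ] ℝ :=
    { toFun := fun B => u ⬝ᵥ (B *ᵥ w)
      map_add' := fun B C => by simp only [add_mulVec, dotProduct_add]
      map_smul' := fun r B => by simp only [smul_mulVec, dotProduct_smul]; rfl }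
  have hL := L.toContinuousLinearMap.hasFDerivAt.comp_hasDerivAt t (hasDerivAt_exp_smul_const A t)
  rw [mulVec_mulVec]
  exact hL

theorem dotProduct_pow_mulVec_eq_zero_of_exp {A : Matrix m m ℝ} {u v : m → ℝ}
    (h : ∀ t : ℝ, 0 ≤ t → u ⬝ᵥ (NormedSpace.exp (t • A) *ᵥ v) = 0) (k : ℕ) :
    u ⬝ᵥ (A ^ k *ᵥ v) = 0 := by
  have hvanish (k : ℕ) : EqOn (fun t : ℝ => u ⬝ᵥ (NormedSpace.exp (t • A) *ᵥ (A ^ k *ᵥ v)))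
      0 (Ici 0) := by
    induction k with
    | zero => exact fun t ht => by simpa using h t ht
    | succ k ih =>
      rw [pow_succ', ← mulVec_mulVec]
      refine eqOn_zero_Ici_of_hasDerivAt (hasDerivAt_dotProduct_exp_smul_mulVec A u _) ?_ ih
      exact continuous_iff_continuousAt.2 fun t =>
        (hasDerivAt_dotProduct_exp_smul_mulVec A u _ t).continuousAt
  simpa using hvanish k (le_refl (0 : ℝ))

end MatrixExp

def krylovMatrix {R : Type*} [CommRing R] {n : ℕ} (A : Matrix (Fin n) (Fin n) R) (v : Fin n → R) :
    Matrix (Fin n) (Fin n) R :=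
  Matrix.of fun i k => (A ^ (k : ℕ) *ᵥ v) i

theorem vecMul_krylovMatrix {R : Type*} [CommRing R] {n : ℕ} {A : Matrix (Fin n) (Fin n) R}
    {v : Fin n → R} (u : Fin n → R) (k : Fin n) :
    (u ᵥ* krylovMatrix A v) k = u ⬝ᵥ (A ^ (k : ℕ) *ᵥ v) :=
  rfl

section Hessenberg

variable {R : Type*} [CommRing R] {n : ℕ} {A : Matrix (Fin (n + 1)) (Fin (n + 1)) R}
  {v : Fin (n + 1) → R}

theorem pow_mulVec_apply_eq_zero_of_lt (hA : ∀ i j : Fin (n + 1), (j : ℕ) + 1 < i → A i j = 0)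
    (hv : ∀ i, i ≠ 0 → v i = 0) : ∀ (k : ℕ) (i : Fin (n + 1)), k < i → (A ^ k *ᵥ v) i = 0
  | 0, i, hi => by simpa using hv i (Fin.pos_iff_ne_zero.mp hi)
  | k + 1, i, hi => by
    rw [pow_succ', ← mulVec_mulVec]
    show ∑ j, A i j * (A ^ k *ᵥ v) j = 0
    refine Finset.sum_eq_zero fun j _ => ?_
    rcases lt_or_ge ((j : ℕ) + 1) i with hj | hj
    · simp [hA i j hj]
    · simp [pow_mulVec_apply_eq_zero_of_lt hA hv k j (by omega)]

theorem pow_mulVec_apply_ne_zero [IsDomain R]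
    (hA : ∀ i j : Fin (n + 1), (j : ℕ) + 1 < i → A i j = 0)
    (hsub : ∀ i j : Fin (n + 1), (i : ℕ) = j + 1 → A i j ≠ 0)
    (hv : ∀ i, i ≠ 0 → v i = 0) (hv0 : v 0 ≠ 0) :
    ∀ (k : ℕ) (hk : k < n + 1), (A ^ k *ᵥ v) ⟨k, hk⟩ ≠ 0
  | 0, _ => by simpa using hv0
  | k + 1, hk => by
    have hk' : k < n + 1 := by omega
    have hstep : (A ^ (k + 1) *ᵥ v) ⟨k + 1, hk⟩ =
        A ⟨k + 1, hk⟩ ⟨k, hk'⟩ * (A ^ k *ᵥ v) ⟨k, hk'⟩ := by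
      rw [pow_succ', ← mulVec_mulVec]
      show ∑ j, A ⟨k + 1, hk⟩ j * (A ^ k *ᵥ v) j = _
      refine Finset.sum_eq_single (⟨k, hk'⟩ : Fin (n + 1)) (fun j _ hj => ?_) (by simp)
      rcases lt_or_gt_of_ne (Fin.val_ne_of_ne hj) with hjk | hjk
      · simp [hA ⟨k + 1, hk⟩ j (by simpa using hjk)]
      · simp [pow_mulVec_apply_eq_zero_of_lt hA hv k j hjk]
    rw [hstep]
    exact mul_ne_zero (hsub _ _ rfl) (pow_mulVec_apply_ne_zero hA hsub hv hv0 k hk')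

theorem krylovMatrix_isUpperTriangular
    (hA : ∀ i j : Fin (n + 1), (j : ℕ) + 1 < i → A i j = 0) (hv : ∀ i, i ≠ 0 → v i = 0) :
    (krylovMatrix A v).IsUpperTriangular :=
  fun i k hki => pow_mulVec_apply_eq_zero_of_lt hA hv k i hki

theorem det_krylovMatrix_ne_zero [IsDomain R]
    (hA : ∀ i j : Fin (n + 1), (j : ℕ) + 1 < i → A i j = 0)
    (hsub : ∀ i j : Fin (n + 1), (i : ℕ) = j + 1 → A i j ≠ 0)
    (hv : ∀ i, i ≠ 0 → v i = 0) (hv0 : v 0 ≠ 0) :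
    (krylovMatrix A v).det ≠ 0 := by
  rw [det_of_isUpperTriangular (krylovMatrix_isUpperTriangular hA hv)]
  exact Finset.prod_ne_zero_iff.2 fun i _ => pow_mulVec_apply_ne_zero hA hsub hv hv0 i i.2

theorem eq_zero_of_forall_dotProduct_pow_mulVec_eq_zero [IsDomain R]
    (hA : ∀ i j : Fin (n + 1), (j : ℕ) + 1 < i → A i j = 0)
    (hsub : ∀ i j : Fin (n + 1), (i : ℕ) = j + 1 → A i j ≠ 0)
    (hv : ∀ i, i ≠ 0 → v i = 0) (hv0 : v 0 ≠ 0) {u : Fin (n + 1) → R}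
    (hu : ∀ k : ℕ, u ⬝ᵥ (A ^ k *ᵥ v) = 0) : u = 0 :=
  eq_zero_of_vecMul_eq_zero (det_krylovMatrix_ne_zero hA hsub hv hv0) <|
    funext fun k => vecMul_krylovMatrix u k ▸ hu k

end Hessenberg

theorem stmt_9_general (n : ℕ) (lam c : Fin (n + 1) → ℝ)
    (hc : ∀ j : Fin (n + 1), (j : ℕ) + 1 < n + 1 → c j ≠ 0)
    (A : Matrix (Fin (n + 1)) (Fin (n + 1)) ℝ)
    (hA : ∀ i j : Fin (n + 1), A i j =
      if i = j then lam j else if (i : ℕ) = (j : ℕ) + 1 then c j else 0)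
    (N : ℝ) (hN : 0 < N)
    (M : ℝ → Fin (n + 1) → ℝ)
    (hM : ∀ t : ℝ, M t =
      (NormedSpace.exp (t • A)).mulVec (fun j => if j = 0 then N else 0))
    (u : Fin (n + 1) → ℝ)
    (hu : ∀ t : ℝ, 0 ≤ t → ∑ j, u j * M t j = 0) :
    u = 0 := by
  have hHessenberg : ∀ i j : Fin (n + 1), (j : ℕ) + 1 < i → A i j = 0 := fun i j hij => by
    rw [hA, if_neg (by rintro rfl; omega), if_neg (by omega)]
  have hsub : ∀ i j : Fin (n + 1), (i : ℕ) = j + 1 → A i j ≠ 0 := fun i j hij => by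
    rw [hA, if_neg (by rintro rfl; omega), if_pos hij]
    exact hc j (hij ▸ i.2)
  have hmoments : ∀ k : ℕ, u ⬝ᵥ (A ^ k *ᵥ fun j => if j = 0 then N else 0) = 0 :=
    dotProduct_pow_mulVec_eq_zero_of_exp fun t ht => hM t ▸ hu t ht
  exact eq_zero_of_forall_dotProduct_pow_mulVec_eq_zero hHessenberg hsub (fun i hi => if_neg hi)
    (by simpa using hN.ne') hmoments

/-- Identifiability lemma: for the lower bidiagonal matrix `A` with distinct
diagonal entries `λ_j` and nonzero subdiagonal entries `c_j`, if
`uᵀ M(t) = 0` for all `t ≥ 0` where `M(t) = e^{tA} (N,0,…,0)`, `N > 0`,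
then `u = 0`. -/
theorem stmt_9 (n : ℕ) (lam c : Fin (n + 1) → ℝ)
    (hdist : Function.Injective lam)
    (hc : ∀ j : Fin (n + 1), (j : ℕ) + 1 < n + 1 → c j ≠ 0)
    (A : Matrix (Fin (n + 1)) (Fin (n + 1)) ℝ)
    (hA : ∀ i j : Fin (n + 1), A i j =
      if i = j then lam j else if (i : ℕ) = (j : ℕ) + 1 then c j else 0)
    (N : ℝ) (hN : 0 < N)
    (M : ℝ → Fin (n + 1) → ℝ)
    (hM : ∀ t : ℝ, M t =
      (NormedSpace.exp (t • A)).mulVec (fun j => if j = 0 then N else 0))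
    (u : Fin (n + 1) → ℝ)
    (hu : ∀ t : ℝ, 0 ≤ t → ∑ j, u j * M t j = 0) :
    u = 0 :=
  stmt_9_general n lam c hc A hA N hN M hM u hu
end

section
/- Let J ≥ 1 and for each j let dB_j* : dom → ℝ be the Laplace transform of the j-th division-time density, with p_S^{(j)} ∈ (0,1) for j < J, p_S^{(J)} = 1, and intrinsic growth rates μ_j defined by dB_j*(μ_j) = 1/(2p_S^{(j)}). Suppose λ* = max_j μ_j is attained at a unique index c. Then any vector v ∈ ℝ^J satisfying v_j (1 - 2p_S^{(j)} dB_j*(λ*)) = 2 p_L^{(j-1)} dB_{j-1}*(λ*) v_{j-1} for all j (with p_L^{(0)} = 0, p_L^{(j)} = 1 - p_S^{(j)}) must have v_j = 0 for j < c, and is uniquely determined up to scalar by v_c via v_j = v_c ∏_{k=c+1}^{j} [2p_L^{(k-1)} dB_{k-1}*(λ*)] / [1 - 2p_S^{(k)} dB_k*(λ*)] for j > c. -/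
open MeasureTheory Real Set Finset

/-- The Laplace transform of the division-time density `dB(s) = b(s) e^{-∫₀ˢ b}`. -/
noncomputable def laplaceDB (b : ℝ → ℝ) (l : ℝ) : ℝ :=
  ∫ s in Set.Ioi (0:ℝ), Real.exp (-(l * s)) * (b s * Real.exp (-(∫ u in (0:ℝ)..s, b u)))

/-!
The Laplace transform of a positive density is positive and strictly decreasing. Hence
`dB_j*(μ j) = 1 / (2 pS j)` forces `pS j > 0`, and for `j ≠ c`, where `μ j < μ c`,
`2 pS j dB_j*(μ c) < 2 pS j dB_j*(μ j) = 1`: the diagonal entry of `C(μ c)` is nonzero.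
So row `c` is the only possibly singular row of the lower bidiagonal system: forward substitution
from row `0` gives `v j = 0` for `j < c`, and from row `c` on it expresses every `v j` through `v c`.
-/

section LaplaceTransform

theorem setIntegral_pos_of_forall_pos {X : Type*} [MeasurableSpace X] {μ : Measure X}
    {s : Set X} {f : X → ℝ} (hs : MeasurableSet s) (hμs : μ s ≠ 0)
    (hf : IntegrableOn f s μ) (hpos : ∀ x ∈ s, 0 < f x) :
    0 < ∫ x in s, f x ∂μ := by
  rw [setIntegral_pos_iff_support_of_nonneg_ae
    ((ae_restrict_mem hs).mono fun x hx => (hpos x hx).le) hf]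
  have hsupp : Function.support f ∩ s = s :=
    Set.inter_eq_right.2 fun x hx => (hpos x hx).ne'
  rw [hsupp]
  exact pos_iff_ne_zero.2 hμs

variable {g : ℝ → ℝ} {l l' : ℝ}

theorem integrableOn_exp_neg_mul_of_le (hg : AEStronglyMeasurable g (volume.restrict (Ioi 0)))
    (hg0 : ∀ s > 0, 0 ≤ g s) (hll : l ≤ l')
    (hint : IntegrableOn (fun s => exp (-(l * s)) * g s) (Ioi 0)) :
    IntegrableOn (fun s => exp (-(l' * s)) * g s) (Ioi 0) := by
  refine hint.mono' (by fun_prop) ?_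
  filter_upwards [ae_restrict_mem measurableSet_Ioi] with s (hs : 0 < s)
  rw [Real.norm_of_nonneg (mul_nonneg (exp_pos _).le (hg0 s hs))]
  gcongr
  exact hg0 s hs

theorem setIntegral_exp_neg_mul_lt (hg : AEStronglyMeasurable g (volume.restrict (Ioi 0)))
    (hgpos : ∀ s > 0, 0 < g s) (hll : l < l')
    (hint : IntegrableOn (fun s => exp (-(l * s)) * g s) (Ioi 0)) :
    ∫ s in Ioi 0, exp (-(l' * s)) * g s < ∫ s in Ioi 0, exp (-(l * s)) * g s := by
  have hint' := integrableOn_exp_neg_mul_of_le hg (fun s hs => (hgpos s hs).le) hll.le hint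
  rw [← sub_pos, ← integral_sub hint hint']
  refine setIntegral_pos_of_forall_pos measurableSet_Ioi (by simp) (hint.sub hint') ?_
  intro s (hs : 0 < s)
  have hexp : exp (-(l' * s)) < exp (-(l * s)) := exp_lt_exp.2 (by nlinarith)
  nlinarith [hgpos s hs]

variable {b : ℝ → ℝ}

theorem continuous_mul_exp_neg_integral (hb : Continuous b) :
    Continuous fun s => b s * exp (-(∫ u in (0:ℝ)..s, b u)) :=
  hb.mul (intervalIntegral.continuous_primitive (fun _ _ => hb.intervalIntegrable _ _) 0).neg.rexp

theorem laplaceDB_pos (hbpos : ∀ s > 0, 0 < b s)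
    (hint : IntegrableOn (fun s => exp (-(l * s)) * (b s * exp (-(∫ u in (0:ℝ)..s, b u))))
      (Ioi 0)) :
    0 < laplaceDB b l :=
  setIntegral_pos_of_forall_pos measurableSet_Ioi (by simp) hint
    fun s hs => mul_pos (exp_pos _) (mul_pos (hbpos s hs) (exp_pos _))

theorem laplaceDB_lt_laplaceDB (hb : Continuous b) (hbpos : ∀ s > 0, 0 < b s) (hll : l < l')
    (hint : IntegrableOn (fun s => exp (-(l * s)) * (b s * exp (-(∫ u in (0:ℝ)..s, b u))))
      (Ioi 0)) :
    laplaceDB b l' < laplaceDB b l :=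
  setIntegral_exp_neg_mul_lt (continuous_mul_exp_neg_integral hb).aestronglyMeasurable
    (fun s hs => mul_pos (hbpos s hs) (exp_pos _)) hll hint

end LaplaceTransform

section BidiagonalSystem

variable {K : Type*} [Field K] {n : ℕ} {d e v : Fin (n + 1) → K} {c : Fin (n + 1)}

theorem eq_zero_of_lt_of_bidiagonal (hv0 : v 0 * d 0 = 0)
    (hv : ∀ j : Fin n, v j.succ * d j.succ = e j.castSucc * v j.castSucc)
    (hd : ∀ j < c, d j ≠ 0) :
    ∀ j < c, v j = 0 := by
  intro j
  induction j using Fin.induction with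
  | zero => exact fun hc => (mul_eq_zero.1 hv0).resolve_right (hd 0 hc)
  | succ i ih =>
    intro hc
    have hprev : v i.castSucc = 0 := ih (Fin.castSucc_lt_succ.trans hc)
    have hrow := hv i
    rw [hprev, mul_zero] at hrow
    exact (mul_eq_zero.1 hrow).resolve_right (hd _ hc)

theorem eq_mul_prod_of_bidiagonal
    (hv : ∀ j : Fin n, v j.succ * d j.succ = e j.castSucc * v j.castSucc)
    (hd : ∀ j, c < j → d j ≠ 0) :
    ∀ j, c ≤ j → v j = v c * ∏ k ∈ Ioc c j, e (k - 1) / d k := by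
  intro j
  induction j using Fin.induction with
  | zero => intro hc; rw [nonpos_iff_eq_zero.1 hc, Finset.Ioc_self, Finset.prod_empty, mul_one]
  | succ i ih =>
    intro hc
    rcases hc.eq_or_lt with rfl | hlt
    · rw [Finset.Ioc_self, Finset.prod_empty, mul_one]
    have hle : c ≤ i.castSucc := Fin.le_castSucc_iff.2 hlt
    have hIoc : Finset.Ioc c i.succ = insert i.succ (Finset.Ioc c i.castSucc) := by
      rw [← Fin.orderSucc_castSucc, Finset.insert_Ioc_right_eq_Ioc_succ_of_not_isMax hle
        (not_isMax_of_lt Fin.castSucc_lt_succ)]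
    have hnotMem : i.succ ∉ Finset.Ioc c i.castSucc :=
      fun h => (Finset.mem_Ioc.1 h).2.not_gt Fin.castSucc_lt_succ
    have hpred : i.succ - 1 = i.castSucc := sub_eq_iff_eq_add.2 Fin.coeSucc_eq_succ.symm
    have hstep : v i.succ = e (i.succ - 1) / d i.succ * v i.castSucc := by
      rw [hpred, div_mul_eq_mul_div, eq_div_iff (hd _ hlt)]
      exact hv i
    rw [hIoc, prod_insert hnotMem, hstep, ih hle]
    ring

end BidiagonalSystem

theorem stmt_13_general (n : ℕ) (b : Fin (n + 1) → ℝ → ℝ) (bmin bmax : Fin (n + 1) → ℝ)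
    (hb : ∀ j, Continuous (b j)) (hmin : ∀ j, 0 < bmin j)
    (hbd : ∀ j, ∀ a : ℝ, 0 ≤ a → bmin j ≤ b j a ∧ b j a ≤ bmax j)
    (pS : Fin (n + 1) → ℝ)
    (μ : Fin (n + 1) → ℝ)
    (hμint : ∀ j, MeasureTheory.IntegrableOn
      (fun s => Real.exp (-(μ j * s)) * (b j s * Real.exp (-(∫ u in (0:ℝ)..s, b j u))))
      (Set.Ioi (0:ℝ)))
    (hμ : ∀ j, laplaceDB (b j) (μ j) = 1 / (2 * pS j))
    (c : Fin (n + 1)) (hc : ∀ j, j ≠ c → μ j < μ c)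
    (v : Fin (n + 1) → ℝ)
    (hv0 : v 0 * (1 - 2 * pS 0 * laplaceDB (b 0) (μ c)) = 0)
    (hv : ∀ j : Fin n,
      v j.succ * (1 - 2 * pS j.succ * laplaceDB (b j.succ) (μ c)) =
        2 * (1 - pS j.castSucc) * laplaceDB (b j.castSucc) (μ c) * v j.castSucc) :
    (∀ j : Fin (n + 1), j < c → v j = 0) ∧
    (∀ j : Fin (n + 1), c < j → v j = v c *
      ∏ k ∈ Finset.Ioc c j,
        (2 * (1 - pS (k - 1)) * laplaceDB (b (k - 1)) (μ c)) /
          (1 - 2 * pS k * laplaceDB (b k) (μ c))) := by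
  have hdiag : ∀ j ≠ c, 1 - 2 * pS j * laplaceDB (b j) (μ c) ≠ 0 := by
    intro j hj
    have hbpos : ∀ s > 0, 0 < b j s := fun s hs => (hmin j).trans_le (hbd j s hs.le).1
    have hpos := laplaceDB_pos hbpos (hμint j)
    have hlt := laplaceDB_lt_laplaceDB (hb j) hbpos (hc j hj) (hμint j)
    rw [hμ j] at hpos hlt
    have hpS : 0 < 2 * pS j := one_div_pos.1 hpos
    have hlt' := (lt_div_iff₀ hpS).1 hlt
    exact (sub_pos.2 (by linarith)).ne'
  set e : Fin (n + 1) → ℝ := fun k => 2 * (1 - pS k) * laplaceDB (b k) (μ c)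
  exact ⟨eq_zero_of_lt_of_bidiagonal (e := e) hv0 hv fun j hj => hdiag j hj.ne,
    fun j hj => eq_mul_prod_of_bidiagonal (e := e) hv (fun k hk => hdiag k hk.ne') j hj.le⟩

/-- Boundary values of the primal eigenfunction of the multilayer eigenproblem:
any solution `v` of the boundary recursion `C(λ*) v = 0` vanishes upstream of
the leading layer `c`, and downstream it is given explicitly by a product
formula from `v c`. -/
theorem stmt_13 (n : ℕ) (b : Fin (n + 1) → ℝ → ℝ) (bmin bmax : Fin (n + 1) → ℝ)
    (hb : ∀ j, Continuous (b j)) (hmin : ∀ j, 0 < bmin j)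
    (hbd : ∀ j, ∀ a : ℝ, 0 ≤ a → bmin j ≤ b j a ∧ b j a ≤ bmax j)
    (pS : Fin (n + 1) → ℝ)
    (hpS : ∀ j : Fin (n + 1), j ≠ Fin.last n → pS j ∈ Set.Ioo (0:ℝ) 1)
    (hlast : pS (Fin.last n) = 1)
    (μ : Fin (n + 1) → ℝ)
    (hμint : ∀ j, MeasureTheory.IntegrableOn
      (fun s => Real.exp (-(μ j * s)) * (b j s * Real.exp (-(∫ u in (0:ℝ)..s, b j u))))
      (Set.Ioi (0:ℝ)))
    (hμ : ∀ j, laplaceDB (b j) (μ j) = 1 / (2 * pS j))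
    (c : Fin (n + 1)) (hc : ∀ j, j ≠ c → μ j < μ c)
    (v : Fin (n + 1) → ℝ)
    (hv0 : v 0 * (1 - 2 * pS 0 * laplaceDB (b 0) (μ c)) = 0)
    (hv : ∀ j : Fin n,
      v j.succ * (1 - 2 * pS j.succ * laplaceDB (b j.succ) (μ c)) =
        2 * (1 - pS j.castSucc) * laplaceDB (b j.castSucc) (μ c) * v j.castSucc) :
    (∀ j : Fin (n + 1), j < c → v j = 0) ∧
    (∀ j : Fin (n + 1), c < j → v j = v c *
      ∏ k ∈ Finset.Ioc c j,
        (2 * (1 - pS (k - 1)) * laplaceDB (b (k - 1)) (μ c)) /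
          (1 - 2 * pS k * laplaceDB (b k) (μ c))) :=
  stmt_13_general n b bmin bmax hb hmin hbd pS μ hμint hμ c hc v hv0 hv
end

section
/- Let G be a probability distribution function on (0,∞) with G(0+)=0, not supported on a lattice, m ∈ (0,1), and f : [0,∞) → ℝ a bounded measurable function with lim_{t→∞} f(t) = c. If K is a bounded solution of the renewal equation K(t) = f(t) + m ∫₀ᵗ K(t-u) dG(u), then lim_{t→∞} K(t) = c/(1-m). -/
open MeasureTheory Set Filter Topology

/-!
With `κ = c / (1 - m)`, the function `D = K - κ` solves the same renewal equation with source
`f t - κ + m κ ν[0, t]`, which tends to `c - κ + m κ = 0` because `ν` has no mass on `(-∞, 0]`.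
For `S = limsup |D|`, split the convolution at a large `A`: the part over `[0, A]` sees only values
`D s` with `s ≥ t - A`, hence eventually at most `S + ε`, and the part over `(A, t]` is at most
`sup |D| · ν(A, ∞)`. This gives `S ≤ m S`, so `S = 0` since `m < 1`.
-/

theorem tendsto_zero_of_eventually_le_mul_add {α : Type*} {l : Filter α} [l.NeBot]
    {φ : α → ℝ} {q : ℝ} (hφ0 : ∀ x, 0 ≤ φ x) (hφb : IsBoundedUnder (· ≤ ·) l φ) (hq : q < 1)
    (hstep : ∀ B ε : ℝ, 0 < ε → (∀ᶠ x in l, φ x ≤ B) → ∀ᶠ x in l, φ x ≤ q * B + ε) :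
    Tendsto φ l (𝓝 0) := by
  set S := limsup φ l
  have hcobdd : IsCoboundedUnder (· ≤ ·) l φ :=
    (isBoundedUnder_of ⟨0, hφ0⟩ : IsBoundedUnder (· ≥ ·) l φ).isCoboundedUnder_le
  have hS : ∀ ε > 0, S ≤ q * (S + ε) + ε := fun ε hε =>
    limsup_le_of_le hcobdd <| hstep _ ε hε <|
      (eventually_lt_of_limsup_lt (by linarith) hφb).mono fun _ => le_of_lt
  have hSq : S ≤ q * S := by
    refine ge_of_tendsto (x := 𝓝[>] (0 : ℝ)) ?_ (eventually_nhdsWithin_of_forall hS)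
    have hcont : Continuous fun ε : ℝ => q * (S + ε) + ε := by fun_prop
    simpa using (hcont.tendsto 0).mono_left nhdsWithin_le_nhds
  have hS0 : S ≤ 0 := by nlinarith
  refine tendsto_order.2 ⟨fun a ha => .of_forall fun x => ha.trans_le (hφ0 x), fun a ha => ?_⟩
  exact eventually_lt_of_limsup_lt (hS0.trans_lt ha) hφb

theorem tendsto_measureReal_Icc_atTop {α : Type*} [MeasurableSpace α] [Preorder α]
    [(atTop : Filter α).IsCountablyGenerated] (μ : Measure α) [IsFiniteMeasure μ] (a : α) :
    Tendsto (fun t => μ.real (Icc a t)) atTop (𝓝 (μ.real (Ici a))) := by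
  have hmono : Monotone fun t => Icc a t := fun _ _ h => Icc_subset_Icc_right h
  have h := tendsto_measure_iUnion_atTop (μ := μ) hmono
  rw [iUnion_Icc_right] at h
  exact (ENNReal.tendsto_toReal (measure_ne_top μ _)).comp h

theorem tendsto_measureReal_Ioi_atTop (μ : Measure ℝ) [IsFiniteMeasure μ] :
    Tendsto (fun A => μ.real (Ioi A)) atTop (𝓝 0) := by
  have h : Tendsto (fun A => μ.real (Iic A)) atTop (𝓝 (μ.real univ)) :=
    (ENNReal.tendsto_toReal (measure_ne_top μ _)).comp (tendsto_measure_Iic_atTop μ)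
  have hcompl (A : ℝ) : μ.real (Ioi A) = μ.real univ - μ.real (Iic A) := by
    rw [← compl_Iic, measureReal_compl measurableSet_Iic]
  simpa [hcompl] using h.const_sub (μ.real univ)

section Renewal

variable {ν : Measure ℝ} [IsFiniteMeasure ν] {D : ℝ → ℝ} {C : ℝ}

theorem integrable_comp_const_sub_of_abs_le (hD : Measurable D) (hC : ∀ s, |D s| ≤ C) (t : ℝ) :
    Integrable (fun u => D (t - u)) ν :=
  .of_bound (hD.comp (measurable_const.sub measurable_id)).aestronglyMeasurable C
    (.of_forall fun u => hC (t - u))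

theorem abs_setIntegral_Icc_comp_sub_le (hD : Measurable D) (hC : ∀ s, |D s| ≤ C)
    {A B t : ℝ} (hA : 0 ≤ A) (hB : ∀ s, t - A ≤ s → |D s| ≤ B) :
    |∫ u in Icc 0 t, D (t - u) ∂ν| ≤ B * ν.real univ + C * ν.real (Ioi A) := by
  have hB0 : 0 ≤ B := (abs_nonneg _).trans (hB t (by linarith))
  have hC0 : 0 ≤ C := (abs_nonneg _).trans (hC 0)
  rw [← integral_inter_add_sdiff measurableSet_Iic
    (integrable_comp_const_sub_of_abs_le hD hC t).integrableOn]
  have hnear : |∫ u in Icc 0 t ∩ Iic A, D (t - u) ∂ν| ≤ B * ν.real univ :=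
    calc _ ≤ B * ν.real (Icc 0 t ∩ Iic A) :=
          norm_setIntegral_le_of_norm_le_const (f := fun u => D (t - u)) (measure_lt_top _ _)
            fun u hu => hB _ (by linarith [hu.2.out])
      _ ≤ B * ν.real univ := mul_le_mul_of_nonneg_left (measureReal_mono (subset_univ _)) hB0
  have hfar : |∫ u in Icc 0 t \ Iic A, D (t - u) ∂ν| ≤ C * ν.real (Ioi A) :=
    calc _ ≤ C * ν.real (Icc 0 t \ Iic A) :=
          norm_setIntegral_le_of_norm_le_const (f := fun u => D (t - u)) (measure_lt_top _ _)
            fun u _ => hC _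
      _ ≤ C * ν.real (Ioi A) :=
          mul_le_mul_of_nonneg_left (measureReal_mono fun u hu => mem_Ioi.2 (not_le.1 hu.2)) hC0
  exact (abs_add_le _ _).trans (add_le_add hnear hfar)

theorem tendsto_zero_of_renewal_eq {m : ℝ} (hm : |m| * ν.real univ < 1) {g : ℝ → ℝ}
    (hg : Tendsto g atTop (𝓝 0)) (hD : Measurable D) (hC : ∀ s, |D s| ≤ C)
    (hren : ∀ t, 0 ≤ t → D t = g t + m * ∫ u in Icc 0 t, D (t - u) ∂ν) :
    Tendsto D atTop (𝓝 0) := by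
  rw [tendsto_zero_iff_abs_tendsto_zero]
  refine tendsto_zero_of_eventually_le_mul_add (fun t => abs_nonneg _)
    (isBoundedUnder_of ⟨C, hC⟩) hm fun B ε hε hDB => ?_
  obtain ⟨T, hT⟩ := eventually_atTop.1 hDB
  have htail := (tendsto_measureReal_Ioi_atTop ν).const_mul (|m| * C)
  rw [mul_zero] at htail
  obtain ⟨A, hA, hA0⟩ := (htail.eventually (gt_mem_nhds (half_pos hε))).and
    (eventually_ge_atTop 0) |>.exists
  have hg' : Tendsto (fun t => |g t|) atTop (𝓝 0) := by simpa using hg.abs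
  filter_upwards [hg'.eventually (gt_mem_nhds (half_pos hε)),
    eventually_ge_atTop (T + A), eventually_ge_atTop 0] with t hgt htT ht0
  have hint := abs_setIntegral_Icc_comp_sub_le (ν := ν) hD hC hA0
    fun s hs => hT s (by linarith)
  calc |D t| ≤ |g t| + |m| * |∫ u in Icc 0 t, D (t - u) ∂ν| := by
        rw [hren t ht0, ← abs_mul]; exact abs_add_le _ _
    _ ≤ |g t| + |m| * (B * ν.real univ + C * ν.real (Ioi A)) := by gcongr
    _ ≤ |m| * ν.real univ * B + ε := by nlinarith

end Renewal

theorem renewal_eq_sub_const {ν : Measure ℝ} [IsFiniteMeasure ν] {m κ : ℝ} {f K : ℝ → ℝ}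
    (hKm : Measurable K) {C : ℝ} (hC : ∀ s, |K s| ≤ C) {t : ℝ}
    (hK : K t = f t + m * ∫ u in Icc 0 t, K (t - u) ∂ν) :
    K t - κ = (f t - κ + m * κ * ν.real (Icc 0 t)) + m * ∫ u in Icc 0 t, (K (t - u) - κ) ∂ν := by
  have hint := (integrable_comp_const_sub_of_abs_le (ν := ν) hKm hC t).integrableOn (s := Icc 0 t)
  rw [integral_sub hint (integrable_const κ), setIntegral_const, hK, smul_eq_mul]
  ring

theorem stmt_15_general (ν : MeasureTheory.Measure ℝ) [MeasureTheory.IsProbabilityMeasure ν]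
    (hν0 : ν (Set.Iic (0:ℝ)) = 0)
    (m : ℝ) (hm : m ∈ Set.Ioo (0:ℝ) 1)
    (c : ℝ) (f : ℝ → ℝ)
    (hfc : Filter.Tendsto f Filter.atTop (nhds c))
    (K : ℝ → ℝ) (hKm : Measurable K)
    (hKb : ∃ C : ℝ, ∀ t : ℝ, |K t| ≤ C)
    (hK : ∀ t : ℝ, 0 ≤ t → K t = f t + m * ∫ u in Set.Icc 0 t, K (t - u) ∂ν) :
    Filter.Tendsto K Filter.atTop (nhds (c / (1 - m))) := by
  obtain ⟨C, hC⟩ := hKb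
  set κ := c / (1 - m)
  have hκ : c - κ + m * κ = 0 := by
    have : 1 - m ≠ 0 := (sub_pos.2 hm.2).ne'
    simp only [κ]
    field_simp
    ring
  have hIci : ν.real (Ici 0) = 1 := by
    rw [measureReal_def, (prob_compl_eq_zero_iff measurableSet_Ici).1, ENNReal.toReal_one]
    exact measure_mono_null (by simp) hν0
  have hsource : Tendsto (fun t => f t - κ + m * κ * ν.real (Icc 0 t)) atTop (𝓝 0) := by
    simpa [hIci, hκ] using
      (hfc.sub_const κ).add ((tendsto_measureReal_Icc_atTop ν 0).const_mul (m * κ))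
  have hcontract : |m| * ν.real univ < 1 := by simpa [abs_of_pos hm.1] using hm.2
  exact tendsto_sub_nhds_zero_iff.1 <| tendsto_zero_of_renewal_eq (C := C + |κ|) hcontract hsource
    (hKm.sub measurable_const) (fun s => (abs_sub _ _).trans (by linarith [hC s]))
    fun t ht => renewal_eq_sub_const hKm hC (hK t ht)

/-- Harris's subcritical renewal lemma: if `K` is a bounded solution of
`K(t) = f(t) + m ∫₀ᵗ K(t-u) dG(u)` with `m ∈ (0,1)`, `G` a non-lattice
probability distribution on `(0,∞)`, and `f(t) → c`, then
`K(t) → c/(1-m)`. -/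
theorem stmt_15 (ν : MeasureTheory.Measure ℝ) [MeasureTheory.IsProbabilityMeasure ν]
    (hν0 : ν (Set.Iic (0:ℝ)) = 0)
    (hlattice : ¬ ∃ d : ℝ, 0 < d ∧ ∀ᵐ x ∂ν, ∃ k : ℕ, x = (k : ℝ) * d)
    (m : ℝ) (hm : m ∈ Set.Ioo (0:ℝ) 1)
    (c : ℝ) (f : ℝ → ℝ) (hfm : Measurable f)
    (hfb : ∃ C : ℝ, ∀ t : ℝ, |f t| ≤ C)
    (hfc : Filter.Tendsto f Filter.atTop (nhds c))
    (K : ℝ → ℝ) (hKm : Measurable K)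
    (hKb : ∃ C : ℝ, ∀ t : ℝ, |K t| ≤ C)
    (hK : ∀ t : ℝ, 0 ≤ t → K t = f t + m * ∫ u in Set.Icc 0 t, K (t - u) ∂ν) :
    Filter.Tendsto K Filter.atTop (nhds (c / (1 - m))) :=
  stmt_15_general ν hν0 m hm c f hfc K hKm hKb hK
end

section
/- Consider a single-layer Bellman–Harris process with constant division rate b > 0 (exponential lifetimes), where at division both daughters remain with probability p_{2,0} and p_S = p_{2,0} + p_{1,1}/2, and let μ = (2p_S - 1)b be its Malthus parameter, assumed positive. Let M(t) be the mean number of cells at time t starting from one cell of age 0, and L(t) the second moment. Then L(t) e^{-2μt} converges as t → ∞ to [2p_{2,0} dB*(2μ) m̃²] / [1 - 2p_S dB*(2μ)], where dB*(λ) = b/(b+λ) and m̃ = lim M(t)e^{-μt}; consequently the limiting normalized variance is ṽ = [2p_{2,0} dB*(2μ)/(1 - 2p_S dB*(2μ)) - 1] m̃². -/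
open MeasureTheory Real Set Filter intervalIntegral Topology

/-!
For the exponential division-time density `dB(u) = b e^{-bu}`, the convolution
`(f ∗ dB)(t) = b e^{-bt} ∫₀ᵗ f(s) e^{bs} ds`, so a homogeneous renewal equation
`D = K (D ∗ dB)` makes `H(t) = ∫₀ᵗ D(s) e^{bs} ds` solve `H' = K b H`, `H(0) = 0`; by Grönwall
continuous solutions of renewal equations are unique. The solutions can then be guessed:
`M(t) = e^{μt}` (because `2 p_S b = b + μ`), so `m̃ = 1`, and
`L(t) = (1 - r) e^{μt} + r e^{2μt}` with `r = 2 p_{2,0} b / μ`, which is the claimed limit since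
`1 - 2 p_S dB*(2μ) = μ / (b + 2μ)`.
-/

/-- `(f ∗ dB)(t)` for the density `dB(u) = b e^{-bu}`. -/
noncomputable def expConv (b : ℝ) (f : ℝ → ℝ) (t : ℝ) : ℝ :=
  ∫ u in (0:ℝ)..t, f (t - u) * (b * exp (-(b * u)))

lemma expConv_eq (b : ℝ) (f : ℝ → ℝ) (t : ℝ) :
    expConv b f t = b * exp (-(b * t)) * ∫ s in (0:ℝ)..t, f s * exp (b * s) := by
  have h := integral_comp_sub_left
    (fun s => b * exp (-(b * t)) * (f s * exp (b * s))) t (a := 0) (b := t)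
  rw [sub_self, sub_zero] at h
  rw [expConv, ← intervalIntegral.integral_const_mul, ← h]
  refine integral_congr fun u _ => ?_
  have hexp : exp (-(b * u)) = exp (-(b * t)) * exp (b * (t - u)) := by
    rw [← exp_add]; ring_nf
  simp only [hexp]
  ring

lemma expConv_add {f g : ℝ → ℝ} (hf : Continuous f) (hg : Continuous g) (b t : ℝ) :
    expConv b (fun s => f s + g s) t = expConv b f t + expConv b g t := by
  simp only [expConv, add_mul]
  exact integral_add ((by fun_prop : Continuous _).intervalIntegrable _ _)
    ((by fun_prop : Continuous _).intervalIntegrable _ _)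

lemma expConv_sub {f g : ℝ → ℝ} (hf : Continuous f) (hg : Continuous g) (b t : ℝ) :
    expConv b (fun s => f s - g s) t = expConv b f t - expConv b g t := by
  simp only [expConv, sub_mul]
  exact integral_sub ((by fun_prop : Continuous _).intervalIntegrable _ _)
    ((by fun_prop : Continuous _).intervalIntegrable _ _)

lemma expConv_const_mul (a b : ℝ) (f : ℝ → ℝ) (t : ℝ) :
    expConv b (fun s => a * f s) t = a * expConv b f t := by
  simp only [expConv, mul_assoc, intervalIntegral.integral_const_mul]

lemma expConv_congr {b t : ℝ} {f g : ℝ → ℝ} (ht : 0 ≤ t) (h : EqOn f g (Icc 0 t)) :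
    expConv b f t = expConv b g t := by
  refine integral_congr fun u hu => ?_
  rw [uIcc_of_le ht] at hu
  simp only [h ⟨sub_nonneg.2 hu.2, by linarith [hu.1]⟩]

lemma integral_exp_const_mul {c : ℝ} (hc : c ≠ 0) (t : ℝ) :
    ∫ s in (0:ℝ)..t, exp (c * s) = (exp (c * t) - 1) / c := by
  rw [integral_comp_mul_left (fun s => exp s) hc, integral_exp, mul_zero, exp_zero, smul_eq_mul,
    inv_mul_eq_div]

lemma expConv_exp {b c : ℝ} (hbc : b + c ≠ 0) (t : ℝ) :
    expConv b (fun s => exp (c * s)) t = b / (b + c) * (exp (c * t) - exp (-(b * t))) := by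
  have hsum : ∀ s, exp (c * s) * exp (b * s) = exp ((b + c) * s) := fun s => by
    rw [← exp_add]; ring_nf
  have hcancel : exp (-(b * t)) * exp ((b + c) * t) = exp (c * t) := by
    rw [← exp_add]; ring_nf
  rw [expConv_eq]
  simp only [hsum]
  rw [integral_exp_const_mul hbc, ← hcancel]
  ring

theorem eq_zero_of_eq_mul_expConv {b K : ℝ} {D : ℝ → ℝ} (hD : Continuous D)
    (h : ∀ t, 0 ≤ t → D t = K * expConv b D t) {t : ℝ} (ht : 0 ≤ t) : D t = 0 := by
  set H : ℝ → ℝ := fun t => ∫ s in (0:ℝ)..t, D s * exp (b * s) with hH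
  have hDH : ∀ x, 0 ≤ x → D x * exp (b * x) = K * b * H x := fun x hx => by
    have hinv : exp (-(b * x)) * exp (b * x) = 1 := by rw [← exp_add]; simp
    rw [h x hx, expConv_eq]
    linear_combination (K * b * H x) * hinv
  have hderiv : ∀ x, HasDerivAt H (D x * exp (b * x)) x := fun x =>
    ((hD.mul (by fun_prop)).integral_hasStrictDerivAt 0 x).hasDerivAt
  have hHcont : Continuous H := continuous_iff_continuousAt.2 fun x => (hderiv x).continuousAt
  have hH0 : ∀ x ∈ Icc 0 t, H x = 0 :=
    eq_zero_of_abs_deriv_le_mul_abs_self_of_eq_zero_right (K := |K * b|) hHcont.continuousOn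
      (fun x _ => (hderiv x).hasDerivWithinAt) (by simp [hH])
      (fun x hx => by rw [hDH x hx.1, norm_mul, Real.norm_eq_abs])
  have hexp : D t * exp (b * t) = 0 := by rw [hDH t ht, hH0 t ⟨ht, le_rfl⟩, mul_zero]
  simpa [exp_ne_zero] using hexp

theorem eqOn_of_renewal {b K : ℝ} {g f₁ f₂ : ℝ → ℝ} (hf₁ : Continuous f₁) (hf₂ : Continuous f₂)
    (h₁ : ∀ t, 0 ≤ t → f₁ t = g t + K * expConv b f₁ t)
    (h₂ : ∀ t, 0 ≤ t → f₂ t = g t + K * expConv b f₂ t) :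
    EqOn f₁ f₂ (Ici 0) := fun t ht => by
  have hdiff : ∀ t, 0 ≤ t → f₁ t - f₂ t = K * expConv b (fun s => f₁ s - f₂ s) t :=
    fun t ht => by
      rw [expConv_sub hf₁ hf₂]
      linear_combination h₁ t ht - h₂ t ht
  exact sub_eq_zero.1 (eq_zero_of_eq_mul_expConv (hf₁.sub hf₂) hdiff ht)

lemma eqOn_exp_of_renewal {b K μ : ℝ} {M : ℝ → ℝ} (hM : Continuous M) (hbμ : b + μ ≠ 0)
    (hK : K * b = b + μ) (h : ∀ t, 0 ≤ t → M t = exp (-(b * t)) + K * expConv b M t) :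
    EqOn M (fun t => exp (μ * t)) (Ici 0) :=
  eqOn_of_renewal hM (by fun_prop) h fun t _ => by
    have hKb : K * (b / (b + μ)) = 1 := by rw [← mul_div_assoc, hK, div_self hbμ]
    rw [expConv_exp hbμ]
    linear_combination -(exp (μ * t) - exp (-(b * t))) * hKb

lemma eqOn_exp_add_exp_of_renewal {b K μ c : ℝ} {L : ℝ → ℝ} (hL : Continuous L)
    (hbμ : b + μ ≠ 0) (hb2μ : b + 2 * μ ≠ 0) (hμ : μ ≠ 0) (hK : K * b = b + μ)
    (h : ∀ t, 0 ≤ t → L t = exp (-(b * t)) + K * expConv b L t +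
      c * expConv b (fun s => exp (2 * μ * s)) t) :
    EqOn L (fun t => (1 - c * b / μ) * exp (μ * t) + c * b / μ * exp (2 * μ * t)) (Ici 0) := by
  set r := c * b / μ with hr
  have hKb : K * (b / (b + μ)) = 1 := by rw [← mul_div_assoc, hK, div_self hbμ]
  have hKb' : K * (b / (b + 2 * μ)) * r + c * (b / (b + 2 * μ)) = r := by
    rw [hr]
    field_simp
    linear_combination c * b * hK
  refine eqOn_of_renewal
    (g := fun t => exp (-(b * t)) + c * expConv b (fun s => exp (2 * μ * s)) t) (K := K)
    hL (by fun_prop) (fun t ht => by rw [h t ht]; ring) fun t _ => ?_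
  rw [expConv_add (by fun_prop) (by fun_prop), expConv_const_mul, expConv_const_mul,
    expConv_exp hbμ, expConv_exp hb2μ]
  linear_combination -(1 - r) * (exp (μ * t) - exp (-(b * t))) * hKb
    - (exp (2 * μ * t) - exp (-(b * t))) * hKb'

lemma tendsto_mul_exp_neg_of_eqOn {μ r : ℝ} (hμ : 0 < μ) {L : ℝ → ℝ}
    (hL : EqOn L (fun t => (1 - r) * exp (μ * t) + r * exp (2 * μ * t)) (Ici 0)) :
    Tendsto (fun t => L t * exp (-(2 * μ * t))) atTop (𝓝 r) := by
  have hdecay : Tendsto (fun t => exp (-(μ * t))) atTop (𝓝 0) :=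
    tendsto_exp_atBot.comp (tendsto_neg_atTop_atBot.comp (tendsto_id.const_mul_atTop hμ))
  have hlim : Tendsto (fun t => (1 - r) * exp (-(μ * t)) + r) atTop (𝓝 r) := by
    simpa using (hdecay.const_mul (1 - r)).add_const r
  refine hlim.congr' ?_
  filter_upwards [eventually_ge_atTop 0] with t ht
  have h1 : exp (μ * t) * exp (-(2 * μ * t)) = exp (-(μ * t)) := by rw [← exp_add]; ring_nf
  have h2 : exp (2 * μ * t) * exp (-(2 * μ * t)) = 1 := by rw [← exp_add]; simp
  rw [hL ht]
  linear_combination (r - 1) * h1 - r * h2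

theorem stmt_17_general (b : ℝ) (hb : 0 < b)
    (p20 : ℝ)
    (pS μ : ℝ) (hμ : μ = (2 * pS - 1) * b) (hμpos : 0 < μ)
    (M L : ℝ → ℝ) (hMcont : Continuous M) (hLcont : Continuous L)
    (hM : ∀ t : ℝ, 0 ≤ t →
      M t = Real.exp (-(b * t)) +
        2 * pS * ∫ u in (0:ℝ)..t, M (t - u) * (b * Real.exp (-(b * u))))
    (hL : ∀ t : ℝ, 0 ≤ t →
      L t = Real.exp (-(b * t)) +
        2 * pS * (∫ u in (0:ℝ)..t, L (t - u) * (b * Real.exp (-(b * u)))) +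
        2 * p20 * (∫ u in (0:ℝ)..t, (M (t - u)) ^ 2 * (b * Real.exp (-(b * u)))))
    (mtil : ℝ)
    (hmtil : Filter.Tendsto (fun t => M t * Real.exp (-(μ * t))) Filter.atTop (nhds mtil)) :
    Filter.Tendsto (fun t => L t * Real.exp (-(2 * μ * t))) Filter.atTop
      (nhds (2 * p20 * (b / (b + 2 * μ)) * mtil ^ 2 /
        (1 - 2 * pS * (b / (b + 2 * μ))))) ∧
    Filter.Tendsto (fun t => (L t - (M t) ^ 2) * Real.exp (-(2 * μ * t))) Filter.atTop
      (nhds ((2 * p20 * (b / (b + 2 * μ)) / (1 - 2 * pS * (b / (b + 2 * μ))) - 1) *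
        mtil ^ 2)) := by
  have hbμ : b + μ ≠ 0 := by positivity
  have hb2μ : b + 2 * μ ≠ 0 := by positivity
  have hK : 2 * pS * b = b + μ := by linear_combination -hμ
  have hMexp : EqOn M (fun t => exp (μ * t)) (Ici 0) := eqOn_exp_of_renewal hMcont hbμ hK hM
  have hLexp := eqOn_exp_add_exp_of_renewal (c := 2 * p20) hLcont hbμ hb2μ hμpos.ne' hK
    fun t ht => by
      have hsq : expConv b (fun s => M s ^ 2) t = expConv b (fun s => exp (2 * μ * s)) t :=
        expConv_congr ht fun s hs => by simp only [hMexp hs.1, sq, ← exp_add]; ring_nf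
      rw [← hsq]
      exact hL t ht
  have hmtil1 : mtil = 1 := tendsto_nhds_unique hmtil <| tendsto_const_nhds.congr' <| by
    filter_upwards [eventually_ge_atTop 0] with t ht
    rw [hMexp ht, ← exp_add, add_neg_cancel, exp_zero]
  have hratio : 2 * p20 * (b / (b + 2 * μ)) / (1 - 2 * pS * (b / (b + 2 * μ))) =
      2 * p20 * b / μ := by
    have hden : 1 - 2 * pS * (b / (b + 2 * μ)) = μ / (b + 2 * μ) := by
      field_simp
      linear_combination -hK
    rw [hden]
    field_simp
  have hLlim := tendsto_mul_exp_neg_of_eqOn hμpos hLexp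
  subst hmtil1
  rw [one_pow, mul_one, hratio, mul_one]
  have hvar := hLlim.sub (hmtil.pow 2)
  rw [one_pow] at hvar
  refine ⟨hLlim, hvar.congr fun t => ?_⟩
  have h2 : exp (-(μ * t)) ^ 2 = exp (-(2 * μ * t)) := by rw [sq, ← exp_add]; ring_nf
  linear_combination -(M t) ^ 2 * h2

/-- Asymptotic second moment and variance of a supercritical single-layer
Markov branching process with constant division rate `b`, division-time
density `dB(t) = b e^{-bt}`, self-renewal probability `p_S = p_{2,0} + p_{1,1}/2`
and Malthus parameter `μ = (2p_S - 1)b > 0`: with `dB*(λ) = b/(b+λ)`,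
`L(t) e^{-2μt} → 2 p_{2,0} dB*(2μ) m̃² / (1 - 2 p_S dB*(2μ))`, and the
normalized variance converges to
`(2 p_{2,0} dB*(2μ)/(1 - 2 p_S dB*(2μ)) - 1) m̃²`. -/
theorem stmt_17 (b : ℝ) (hb : 0 < b)
    (p20 p11 p02 : ℝ) (hp20 : 0 ≤ p20) (hp11 : 0 ≤ p11) (hp02 : 0 ≤ p02)
    (hsum : p20 + p11 + p02 = 1)
    (pS μ : ℝ) (hpS : pS = p20 + p11 / 2) (hμ : μ = (2 * pS - 1) * b) (hμpos : 0 < μ)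
    (M L : ℝ → ℝ) (hMcont : Continuous M) (hLcont : Continuous L)
    (hM : ∀ t : ℝ, 0 ≤ t →
      M t = Real.exp (-(b * t)) +
        2 * pS * ∫ u in (0:ℝ)..t, M (t - u) * (b * Real.exp (-(b * u))))
    (hL : ∀ t : ℝ, 0 ≤ t →
      L t = Real.exp (-(b * t)) +
        2 * pS * (∫ u in (0:ℝ)..t, L (t - u) * (b * Real.exp (-(b * u)))) +
        2 * p20 * (∫ u in (0:ℝ)..t, (M (t - u)) ^ 2 * (b * Real.exp (-(b * u)))))
    (mtil : ℝ)
    (hmtil : Filter.Tendsto (fun t => M t * Real.exp (-(μ * t))) Filter.atTop (nhds mtil)) :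
    Filter.Tendsto (fun t => L t * Real.exp (-(2 * μ * t))) Filter.atTop
      (nhds (2 * p20 * (b / (b + 2 * μ)) * mtil ^ 2 /
        (1 - 2 * pS * (b / (b + 2 * μ))))) ∧
    Filter.Tendsto (fun t => (L t - (M t) ^ 2) * Real.exp (-(2 * μ * t))) Filter.atTop
      (nhds ((2 * p20 * (b / (b + 2 * μ)) / (1 - 2 * pS * (b / (b + 2 * μ))) - 1) *
        mtil ^ 2)) :=
  stmt_17_general b hb p20 pS μ hμ hμpos M L hMcont hLcont hM hL mtil hmtil
end

section
/- Let ρ : [0,∞) × [0,∞) → ℝ^J be a C¹ solution of the linear transport system ∂_t ρ^{(j)} + ∂_a ρ^{(j)} = -b_j(a) ρ^{(j)} with boundary condition ρ(t,0) = ∫₀^∞ K(a) ρ(t,a) da, where K(a) is the lower bidiagonal matrix with entries K_{jj} = 2p_S^{(j)} b_j(a) and K_{j,j-1} = 2p_L^{(j-1)} b_{j-1}(a). Suppose (λ*, ρ̂, φ) is an eigentriple: ρ̂ solves the stationary primal problem with eigenvalue λ*, φ ∈ C¹_b solves the dual problem φ' - B(a)φ + K(a)ᵀφ(0) = λ*φ,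 and ⟨ρ̂,φ⟩ = 1. Then for h(t,a) = e^{-λ* t} ρ(t,a) - η ρ̂(a) with η = ⟨ρ(0,·), φ⟩, one has Σ_j ∫₀^∞ h^{(j)}(t,a) φ^{(j)}(a) da = 0 for all t ≥ 0. -/
/-!
Pair the solution with the dual eigenfunction, `N(t) = Σⱼ ∫ ρⱼ(t,a) φⱼ(a) da`. Along the
characteristics `ρⱼ(t,a) / Eⱼ(a)` is constant, where `Eⱼ(a) = survival bⱼ a = exp (-∫₀ᵃ bⱼ)`, so
`⟨ρ(t+h), φ⟩ - ⟨ρ(t), φ⟩` is the mass born during `[t, t+h]`, paired with `φ` on `[0, h]`, plus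
`⟨ρ(t), Tₕφ - φ⟩` with `Tₕφ(a) = Eⱼ(a+h) / Eⱼ(a) · φ(a+h)`. Dividing by `h` and letting `h → 0⁺`
(dominated convergence, since `Eⱼ` is decreasing) gives the weak form of the transport equation,
`d⁺/dt ⟨ρ, φ⟩ = Σⱼ ρⱼ(t,0) φⱼ(0) + ⟨ρ, φ' - Bφ⟩`. The dual equation turns `φ' - Bφ` into
`λφ - Kᵀφ(0)`, and the renewal condition `ρ(t,0) = ∫ Kρ` cancels the boundary terms against
`⟨ρ, Kᵀφ(0)⟩`. Hence `N' = λN`, so `e^{-λt} N(t) = N(0) = η`, and `⟨ρ̂, φ⟩ = 1` concludes.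
-/

open MeasureTheory Real Set Finset Filter Topology

theorem integral_Ioi_eq_integral_Ioi_zero_comp_add (f : ℝ → ℝ) (c : ℝ) :
    ∫ x in Set.Ioi c, f x = ∫ x in Set.Ioi 0, f (x + c) := by
  have hpre : (fun x : ℝ => x + c) ⁻¹' Set.Ioi c = Set.Ioi 0 := by ext x; simp
  rw [← (measurePreserving_add_right volume c).setIntegral_preimage_emb
    (MeasurableEquiv.addRight c).measurableEmbedding f (Set.Ioi c), hpre]

theorem integrableOn_Ioi_mul_of_abs_le {f g : ℝ → ℝ} {C : ℝ} (hf : IntegrableOn f (Set.Ioi 0))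
    (hg : Continuous g) (hgC : ∀ a, 0 ≤ a → |g a| ≤ C) :
    IntegrableOn (fun a => f a * g a) (Set.Ioi 0) :=
  hf.mul_bdd hg.aestronglyMeasurable
    ((ae_restrict_mem measurableSet_Ioi).mono fun a ha => hgC a (le_of_lt ha))

theorem setIntegral_const_mul_sub_const_mul_mul {f g φ : ℝ → ℝ} {s : Set ℝ} (c d : ℝ)
    (hf : IntegrableOn (fun a => f a * φ a) s) (hg : IntegrableOn (fun a => g a * φ a) s) :
    ∫ a in s, (c * f a - d * g a) * φ a =
      c * (∫ a in s, f a * φ a) - d * ∫ a in s, g a * φ a := by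
  rw [← integral_const_mul, ← integral_const_mul,
    ← integral_sub (hf.const_mul c) (hg.const_mul d)]
  simp only [sub_mul, mul_assoc]

theorem tendsto_inv_mul_intervalIntegral_zero {f : ℝ → ℝ → ℝ}
    (hf : Continuous (Function.uncurry f)) :
    Tendsto (fun h => h⁻¹ * ∫ a in (0:ℝ)..h, f h a) (𝓝[>] 0) (𝓝 (f 0 0)) := by
  have hG : Continuous fun h => ∫ s in (0:ℝ)..1, f h (h * s) :=
    intervalIntegral.continuous_parametric_intervalIntegral_of_continuous'
      (f := fun h s => f h (h * s))
      (hf.comp (continuous_fst.prodMk (continuous_fst.mul continuous_snd))) 0 1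
  have hlim := (hG.tendsto 0).mono_left (nhdsWithin_le_nhds (s := Set.Ioi 0))
  simp only [zero_mul, intervalIntegral.integral_const, sub_zero, one_smul] at hlim
  refine hlim.congr' (eventually_nhdsWithin_of_forall fun h hh => ?_)
  rw [intervalIntegral.integral_comp_mul_left (fun a => f h a) (ne_of_gt hh), mul_zero, mul_one,
    smul_eq_mul]

theorem hasDerivWithinAt_Ici_of_tendsto_slope_zero_right {f : ℝ → ℝ} {f' x : ℝ}
    (hf : Tendsto (fun h => h⁻¹ * (f (x + h) - f x)) (𝓝[>] 0) (𝓝 f')) :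
    HasDerivWithinAt f f' (Ici x) x := by
  rw [← hasDerivWithinAt_Ioi_iff_Ici,
    hasDerivWithinAt_iff_tendsto_slope' (by simp : x ∉ Set.Ioi x),
    ← add_zero x, ← map_add_left_nhdsGT, tendsto_map'_iff]
  simpa [Function.comp_def, slope_def_field, div_eq_inv_mul] using hf

theorem exp_neg_mul_mul_eq_of_hasDerivWithinAt_Ici {N : ℝ → ℝ} {lam t : ℝ} (ht : 0 ≤ t)
    (hcont : ContinuousOn N (Icc 0 t))
    (hderiv : ∀ x ∈ Ico 0 t, HasDerivWithinAt N (lam * N x) (Ici x) x) :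
    exp (-(lam * t)) * N t = N 0 := by
  have hconst := constant_of_has_deriv_right_zero (f := fun x => exp (-(lam * x)) * N x)
    ((by fun_prop : Continuous fun x => exp (-(lam * x))).continuousOn.mul hcont) ?_ t
    ⟨ht, le_rfl⟩
  · simpa using hconst
  · intro x hx
    have he : HasDerivAt (fun x => exp (-(lam * x))) (exp (-(lam * x)) * -lam) x := by
      simpa using ((hasDerivAt_id x).const_mul lam).neg.exp
    exact (he.hasDerivWithinAt.mul (hderiv x hx)).congr_deriv (by ring)

noncomputable def survival (b : ℝ → ℝ) (a : ℝ) : ℝ := exp (-∫ x in (0:ℝ)..a, b x)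

section Transport

variable {b : ℝ → ℝ}

theorem survival_pos (b : ℝ → ℝ) (a : ℝ) : 0 < survival b a := exp_pos _

theorem hasDerivAt_survival (hb : Continuous b) (a : ℝ) :
    HasDerivAt (survival b) (-b a * survival b a) a := by
  have := ((hb.integral_hasStrictDerivAt 0 a).hasDerivAt.neg).exp
  rwa [mul_comm] at this

theorem continuous_survival (hb : Continuous b) : Continuous (survival b) :=
  continuous_iff_continuousAt.2 fun a => (hasDerivAt_survival hb a).continuousAt

theorem survival_le_survival (hb : Continuous b) (hb0 : ∀ a, 0 ≤ a → 0 ≤ b a) {a u : ℝ}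
    (ha : 0 ≤ a) (hau : a ≤ u) : survival b u ≤ survival b a := by
  refine exp_le_exp.2 (neg_le_neg ?_)
  refine intervalIntegral.integral_mono_interval le_rfl ha hau ?_ (hb.intervalIntegrable 0 u)
  filter_upwards [ae_restrict_mem measurableSet_Ioc] with x hx using hb0 x hx.1.le

theorem abs_survival_div_mul_le (hb : Continuous b) (hb0 : ∀ a, 0 ≤ a → 0 ≤ b a) {a h : ℝ}
    (ha : 0 ≤ a) (hh : 0 ≤ h) (x : ℝ) : |survival b (a + h) / survival b a * x| ≤ |x| := by
  rw [abs_mul, abs_div, abs_of_pos (survival_pos b _), abs_of_pos (survival_pos b _)]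
  exact mul_le_of_le_one_left (abs_nonneg x) (div_le_one_of_le₀
    (survival_le_survival hb hb0 ha (le_add_of_nonneg_right hh)) (survival_pos b a).le)

theorem hasDerivAt_survival_div_mul (hb : Continuous b) {φ φ' : ℝ → ℝ}
    (hφ' : ∀ a, 0 ≤ a → HasDerivAt φ (φ' a) a) {a u : ℝ} (ha : 0 ≤ a) (hu : 0 ≤ u) :
    HasDerivAt (fun u => survival b (a + u) / survival b a * φ (a + u))
      (survival b (a + u) / survival b a * (φ' (a + u) - b (a + u) * φ (a + u))) u := by
  have hE := ((hasDerivAt_survival hb (a + u)).comp_const_add a u).div_const (survival b a)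
  have hφu := (hφ' (a + u) (add_nonneg ha hu)).comp_const_add a u
  exact (hE.mul hφu).congr_deriv (by ring)

theorem tendsto_integral_mul_slope_survival (hb : Continuous b)
    (hb0 : ∀ a, 0 ≤ a → 0 ≤ b a) {f φ φ' : ℝ → ℝ} {M : ℝ} (hf : IntegrableOn f (Set.Ioi 0))
    (hφ : Continuous φ) (hφ' : ∀ a, 0 ≤ a → HasDerivAt φ (φ' a) a)
    (hM : ∀ a, 0 ≤ a → |φ' a - b a * φ a| ≤ M) :
    Tendsto (fun h => ∫ a in Set.Ioi 0,
        f a * (h⁻¹ * (survival b (a + h) / survival b a * φ (a + h) - φ a)))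
      (𝓝[>] 0) (𝓝 (∫ a in Set.Ioi 0, f a * (φ' a - b a * φ a))) := by
  have hE := continuous_survival hb
  refine tendsto_integral_filter_of_dominated_convergence (fun a => ‖f a‖ * M) ?_ ?_
    (hf.norm.mul_const M) ?_
  · refine Eventually.of_forall fun h => hf.aestronglyMeasurable.mul ?_
    exact Continuous.aestronglyMeasurable
      (by fun_prop (disch := exact fun a => (survival_pos b a).ne'))
  · filter_upwards [self_mem_nhdsWithin] with h (hh : 0 < h)
    filter_upwards [ae_restrict_mem measurableSet_Ioi] with a (ha : 0 < a)
    have hmvt := norm_image_sub_le_of_norm_deriv_le_segment' (C := M)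
      (fun u hu => (hasDerivAt_survival_div_mul hb hφ' ha.le hu.1).hasDerivWithinAt)
      (fun u hu => (abs_survival_div_mul_le hb hb0 ha.le hu.1 _).trans
        (hM _ (add_nonneg ha.le hu.1))) h ⟨hh.le, le_rfl⟩
    simp only [add_zero, div_self (survival_pos b a).ne', one_mul, sub_zero] at hmvt
    rw [norm_mul, norm_mul, norm_inv, Real.norm_of_nonneg hh.le]
    gcongr
    rw [inv_mul_le_iff₀ hh]
    exact hmvt.trans_eq (mul_comm M h)
  · filter_upwards [ae_restrict_mem measurableSet_Ioi] with a (ha : 0 < a)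
    have hslope := (hasDerivAt_survival_div_mul hb hφ' ha.le le_rfl).tendsto_slope_zero_right
    simp only [zero_add, add_zero, div_self (survival_pos b a).ne', one_mul, smul_eq_mul]
      at hslope
    exact hslope.const_mul (f a)

variable {ρ : ℝ → ℝ → ℝ}

theorem mul_survival_eq_of_transport (hb : Continuous b)
    (hρ : ∀ t, 0 ≤ t → ∀ a, 0 ≤ a →
      HasDerivAt (fun s => ρ (t + s) (a + s)) (-b a * ρ t a) 0)
    {t a s : ℝ} (ht : 0 ≤ t) (ha : 0 ≤ a) (hs : 0 ≤ s) :
    ρ (t + s) (a + s) * survival b a = ρ t a * survival b (a + s) := by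
  set z : ℝ → ℝ := fun u => ρ (t + u) (a + u) / survival b (a + u)
  have hz : ∀ u, 0 ≤ u → HasDerivAt z 0 u := by
    intro u hu
    have hρu : HasDerivAt (fun v => ρ (t + v) (a + v)) (-b (a + u) * ρ (t + u) (a + u)) u := by
      have h0 := hρ (t + u) (add_nonneg ht hu) (a + u) (add_nonneg ha hu)
      rw [← sub_self u] at h0
      have e : (fun v => ρ (t + v) (a + v)) =
          fun v => ρ (t + u + (v - u)) (a + u + (v - u)) := by
        funext v; ring_nf
      rw [e]
      exact h0.comp_sub_const u u
    have hEu : HasDerivAt (fun v => survival b (a + v))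
        (-b (a + u) * survival b (a + u)) u := by
      simpa using (hasDerivAt_survival hb (a + u)).comp_const_add a u
    exact (hρu.div hEu (survival_pos b _).ne').congr_deriv (by ring)
  have hconst := constant_of_has_deriv_right_zero (f := z)
    (fun u hu => (hz u hu.1).continuousAt.continuousWithinAt)
    (fun u hu => (hz u hu.1).hasDerivWithinAt) s ⟨hs, le_rfl⟩
  simp only [z, add_zero] at hconst
  rwa [div_eq_div_iff (survival_pos b _).ne' (survival_pos b _).ne'] at hconst

variable {φ : ℝ → ℝ} {C : ℝ}

theorem integral_mul_add_sub_integral_mul (hb : Continuous b) (hb0 : ∀ a, 0 ≤ a → 0 ≤ b a)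
    (hρL1 : ∀ t, 0 ≤ t → IntegrableOn (ρ t) (Set.Ioi 0))
    (hρ : ∀ t, 0 ≤ t → ∀ a, 0 ≤ a →
      HasDerivAt (fun s => ρ (t + s) (a + s)) (-b a * ρ t a) 0)
    (hφ : Continuous φ) (hφC : ∀ a, 0 ≤ a → |φ a| ≤ C) {t h : ℝ} (ht : 0 ≤ t) (hh : 0 ≤ h) :
    (∫ a in Set.Ioi 0, ρ (t + h) a * φ a) - ∫ a in Set.Ioi 0, ρ t a * φ a =
      (∫ a in (0:ℝ)..h, ρ (t + h) a * φ a) +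
        ∫ a in Set.Ioi 0, ρ t a * (survival b (a + h) / survival b a * φ (a + h) - φ a) := by
  have hI : ∀ s, 0 ≤ s → IntegrableOn (fun a => ρ s a * φ a) (Set.Ioi 0) :=
    fun s hs => integrableOn_Ioi_mul_of_abs_le (hρL1 s hs) hφ hφC
  have hT : IntegrableOn (fun a => ρ t a * (survival b (a + h) / survival b a * φ (a + h)))
      (Set.Ioi 0) := by
    have hE := continuous_survival hb
    refine integrableOn_Ioi_mul_of_abs_le (C := C) (hρL1 t ht)
      (by fun_prop (disch := exact fun a => (survival_pos b a).ne')) fun a ha => ?_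
    exact (abs_survival_div_mul_le hb hb0 ha hh _).trans (hφC _ (add_nonneg ha hh))
  have hshift : ∫ a in Set.Ioi 0, ρ (t + h) (a + h) * φ (a + h) =
      ∫ a in Set.Ioi 0, ρ t a * (survival b (a + h) / survival b a * φ (a + h)) := by
    refine setIntegral_congr_fun measurableSet_Ioi fun a ha => ?_
    have hchar := mul_survival_eq_of_transport hb hρ ht (le_of_lt ha) hh
    field_simp [(survival_pos b a).ne']
    linear_combination φ (a + h) * hchar
  rw [← intervalIntegral.integral_interval_add_Ioi (hI _ (add_nonneg ht hh))
    ((hI _ (add_nonneg ht hh)).mono_set (Ioi_subset_Ioi hh)),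
    integral_Ioi_eq_integral_Ioi_zero_comp_add, add_sub_assoc, hshift,
    ← integral_sub hT (hI t ht)]
  simp only [mul_sub]

theorem hasDerivWithinAt_integral_mul_of_transport (hb : Continuous b)
    (hb0 : ∀ a, 0 ≤ a → 0 ≤ b a) (hρc : Continuous (Function.uncurry ρ))
    (hρL1 : ∀ t, 0 ≤ t → IntegrableOn (ρ t) (Set.Ioi 0))
    (hρ : ∀ t, 0 ≤ t → ∀ a, 0 ≤ a →
      HasDerivAt (fun s => ρ (t + s) (a + s)) (-b a * ρ t a) 0)
    (hφ : Continuous φ) (hφC : ∀ a, 0 ≤ a → |φ a| ≤ C) {φ' : ℝ → ℝ} {M : ℝ}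
    (hφ' : ∀ a, 0 ≤ a → HasDerivAt φ (φ' a) a) (hM : ∀ a, 0 ≤ a → |φ' a - b a * φ a| ≤ M)
    {t : ℝ} (ht : 0 ≤ t) :
    HasDerivWithinAt (fun s => ∫ a in Set.Ioi 0, ρ s a * φ a)
      (ρ t 0 * φ 0 + ∫ a in Set.Ioi 0, ρ t a * (φ' a - b a * φ a)) (Ici t) t := by
  apply hasDerivWithinAt_Ici_of_tendsto_slope_zero_right
  have hbdry : Tendsto (fun h => h⁻¹ * ∫ a in (0:ℝ)..h, ρ (t + h) a * φ a) (𝓝[>] 0)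
      (𝓝 (ρ t 0 * φ 0)) := by
    simpa using tendsto_inv_mul_intervalIntegral_zero (f := fun h a => ρ (t + h) a * φ a)
      ((hρc.comp ((continuous_const.add continuous_fst).prodMk continuous_snd)).mul
        (hφ.comp continuous_snd))
  refine (hbdry.add
    (tendsto_integral_mul_slope_survival hb hb0 (hρL1 t ht) hφ hφ' hM)).congr' ?_
  filter_upwards [self_mem_nhdsWithin] with h (hh : 0 < h)
  rw [integral_mul_add_sub_integral_mul hb hb0 hρL1 hρ hφ hφC ht hh.le, mul_add,
    ← integral_const_mul]
  simp only [mul_left_comm]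

theorem hasDerivWithinAt_integral_mul_of_dual (hb : Continuous b)
    (hb0 : ∀ a, 0 ≤ a → 0 ≤ b a) {B : ℝ} (hbB : ∀ a, 0 ≤ a → |b a| ≤ B)
    (hρc : Continuous (Function.uncurry ρ))
    (hρL1 : ∀ t, 0 ≤ t → IntegrableOn (ρ t) (Set.Ioi 0))
    (hρ : ∀ t, 0 ≤ t → ∀ a, 0 ≤ a →
      HasDerivAt (fun s => ρ (t + s) (a + s)) (-b a * ρ t a) 0)
    (hφ : Continuous φ) (hφC : ∀ a, 0 ≤ a → |φ a| ≤ C) {lam D : ℝ}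
    (hφ' : ∀ a, 0 ≤ a → HasDerivAt φ (lam * φ a + b a * φ a - D * b a) a) {t : ℝ}
    (ht : 0 ≤ t) :
    HasDerivWithinAt (fun s => ∫ a in Set.Ioi 0, ρ s a * φ a)
      (ρ t 0 * φ 0 + lam * (∫ a in Set.Ioi 0, ρ t a * φ a) -
        D * ∫ a in Set.Ioi 0, ρ t a * b a) (Ici t) t := by
  have hM : ∀ a, 0 ≤ a →
      |lam * φ a + b a * φ a - D * b a - b a * φ a| ≤ |lam| * C + |D| * B := by
    intro a ha
    calc _ = |lam * φ a - D * b a| := by ring_nf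
      _ ≤ |lam| * C + |D| * B := by
        refine (abs_sub _ _).trans (add_le_add ?_ ?_) <;> rw [abs_mul] <;>
          gcongr <;> [exact hφC a ha; exact hbB a ha]
  refine (hasDerivWithinAt_integral_mul_of_transport hb hb0 hρc hρL1 hρ hφ hφC hφ' hM
    ht).congr_deriv ?_
  rw [add_sub_assoc, ← integral_const_mul, ← integral_const_mul, ← integral_sub
    ((integrableOn_Ioi_mul_of_abs_le (hρL1 t ht) hφ hφC).const_mul lam)
    ((integrableOn_Ioi_mul_of_abs_le (hρL1 t ht) hb hbB).const_mul D)]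
  congr 2
  ext a
  ring

theorem continuousOn_integral_mul_of_dominated (hρc : Continuous (Function.uncurry ρ))
    (hφ : Continuous φ) (hφC : ∀ a, 0 ≤ a → |φ a| ≤ C) {g : ℝ → ℝ} {s : Set ℝ}
    (hg : IntegrableOn g (Set.Ioi 0)) (hρg : ∀ t ∈ s, ∀ a ∈ Set.Ioi (0:ℝ), |ρ t a| ≤ g a) :
    ContinuousOn (fun t => ∫ a in Set.Ioi 0, ρ t a * φ a) s := by
  have hρφ : Continuous fun p : ℝ × ℝ => ρ p.1 p.2 * φ p.2 := hρc.mul (hφ.comp continuous_snd)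
  refine continuousOn_of_dominated (bound := fun a => g a * C)
    (fun t _ => (hρφ.comp (continuous_const.prodMk continuous_id)).aestronglyMeasurable)
    (fun t ht => ?_) (hg.mul_const C)
    (ae_of_all _ fun a => (hρφ.comp (continuous_id.prodMk continuous_const)).continuousOn)
  filter_upwards [ae_restrict_mem measurableSet_Ioi] with a ha
  rw [Real.norm_eq_abs, abs_mul]
  exact mul_le_mul (hρg t ht a ha) (hφC a (le_of_lt ha)) (abs_nonneg _)
    ((abs_nonneg _).trans (hρg t ht a ha))

end Transport

theorem sum_mul_eq_sum_bidiagonal_transpose {n : ℕ} (p J y m : Fin (n + 1) → ℝ)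
    (h0 : m 0 = 2 * p 0 * J 0)
    (hsucc : ∀ i : Fin n,
      m i.succ = 2 * p i.succ * J i.succ + 2 * (1 - p i.castSucc) * J i.castSucc) :
    ∑ j, m j * y j =
      ∑ j, (2 * p j * y j + (if (j : ℕ) < n then 2 * (1 - p j) * y (j + 1) else 0)) * J j := by
  simp only [add_mul, Finset.sum_add_distrib]
  rw [Fin.sum_univ_succ, Fin.sum_univ_succ (f := fun j => 2 * p j * y j * J j),
    Fin.sum_univ_castSucc
      (f := fun j => (if (j : ℕ) < n then 2 * (1 - p j) * y (j + 1) else 0) * J j)]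
  simp only [h0, hsucc, add_mul, Finset.sum_add_distrib, Fin.val_castSucc, Fin.is_lt, ↓reduceIte,
    Fin.coeSucc_eq_succ, Fin.val_last, lt_self_iff_false, zero_mul, add_zero,
    mul_right_comm _ (J _) (y _)]
  ring

section RenewalSystem

variable {n : ℕ} {b : Fin (n + 1) → ℝ → ℝ} {pS : Fin (n + 1) → ℝ} {B : Fin (n + 1) → ℝ}
  {ρ : Fin (n + 1) → ℝ → ℝ → ℝ}

theorem sum_boundary_mul_eq_of_renewal (hb : ∀ j, Continuous (b j))
    (hbB : ∀ j a, 0 ≤ a → |b j a| ≤ B j)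
    (hρL1 : ∀ j t, 0 ≤ t → IntegrableOn (ρ j t) (Set.Ioi 0))
    (hρbd0 : ∀ t, 0 ≤ t → ρ 0 t 0 = ∫ a in Set.Ioi (0:ℝ), 2 * pS 0 * b 0 a * ρ 0 t a)
    (hρbd : ∀ t, 0 ≤ t → ∀ j : Fin n, ρ j.succ t 0 =
      ∫ a in Set.Ioi (0:ℝ),
        (2 * pS j.succ * b j.succ a * ρ j.succ t a +
          2 * (1 - pS j.castSucc) * b j.castSucc a * ρ j.castSucc t a))
    (y : Fin (n + 1) → ℝ) {t : ℝ} (ht : 0 ≤ t) :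
    ∑ j, ρ j t 0 * y j =
      ∑ j, (2 * pS j * y j + (if (j : ℕ) < n then 2 * (1 - pS j) * y (j + 1) else 0)) *
        ∫ a in Set.Ioi 0, ρ j t a * b j a := by
  have hconst : ∀ j c, ∫ a in Set.Ioi (0:ℝ), c * b j a * ρ j t a =
      c * ∫ a in Set.Ioi 0, ρ j t a * b j a := fun j c => by
    rw [← integral_const_mul]
    simp only [mul_assoc, mul_comm (b j _)]
  have hint : ∀ j c, IntegrableOn (fun a => c * b j a * ρ j t a) (Set.Ioi 0) := fun j c => by
    simpa only [IntegrableOn, mul_assoc, mul_comm (b j _)] using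
      (integrableOn_Ioi_mul_of_abs_le (hρL1 j t ht) (hb j) (hbB j)).const_mul c
  refine sum_mul_eq_sum_bidiagonal_transpose pS _ y _ ?_ fun i => ?_
  · rw [hρbd0 t ht, hconst]
  · rw [hρbd t ht i, integral_add (hint _ _) (hint _ _), hconst, hconst]

theorem hasDerivWithinAt_sum_integral_mul_of_renewal (hb : ∀ j, Continuous (b j))
    (hb0 : ∀ j a, 0 ≤ a → 0 ≤ b j a) (hbB : ∀ j a, 0 ≤ a → |b j a| ≤ B j)
    (hρc : ∀ j, Continuous (Function.uncurry (ρ j)))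
    (hρL1 : ∀ j t, 0 ≤ t → IntegrableOn (ρ j t) (Set.Ioi 0))
    (hρ : ∀ j t, 0 ≤ t → ∀ a, 0 ≤ a →
      HasDerivAt (fun s => ρ j (t + s) (a + s)) (-b j a * ρ j t a) 0)
    (hρbd0 : ∀ t, 0 ≤ t → ρ 0 t 0 = ∫ a in Set.Ioi (0:ℝ), 2 * pS 0 * b 0 a * ρ 0 t a)
    (hρbd : ∀ t, 0 ≤ t → ∀ j : Fin n, ρ j.succ t 0 =
      ∫ a in Set.Ioi (0:ℝ),
        (2 * pS j.succ * b j.succ a * ρ j.succ t a +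
          2 * (1 - pS j.castSucc) * b j.castSucc a * ρ j.castSucc t a))
    {φ : Fin (n + 1) → ℝ → ℝ} {C : Fin (n + 1) → ℝ} (hφ : ∀ j, Continuous (φ j))
    (hφC : ∀ j a, 0 ≤ a → |φ j a| ≤ C j) {lam : ℝ}
    (hφode : ∀ j : Fin (n + 1), ∀ a : ℝ, 0 ≤ a →
      HasDerivAt (φ j)
        (lam * φ j a + b j a * φ j a - 2 * pS j * b j a * φ j 0 -
          (if h : (j : ℕ) < n then 2 * (1 - pS j) * b j a * φ (j + 1) 0 else 0)) a)
    {t : ℝ} (ht : 0 ≤ t) :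
    HasDerivWithinAt (fun s => ∑ j, ∫ a in Set.Ioi 0, ρ j s a * φ j a)
      (lam * ∑ j, ∫ a in Set.Ioi 0, ρ j t a * φ j a) (Ici t) t := by
  set D : Fin (n + 1) → ℝ := fun j =>
    2 * pS j * φ j 0 + (if (j : ℕ) < n then 2 * (1 - pS j) * φ (j + 1) 0 else 0)
  have hF := HasDerivWithinAt.fun_sum (u := Finset.univ) fun j _ =>
    hasDerivWithinAt_integral_mul_of_dual (hb j) (hb0 j) (hbB j) (hρc j) (hρL1 j) (hρ j)
      (hφ j) (hφC j) (D := D j)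
      (fun a ha => (hφode j a ha).congr_deriv (by simp only [D]; split_ifs <;> ring)) ht
  refine hF.congr_deriv ?_
  simp only [Finset.sum_sub_distrib, Finset.sum_add_distrib, ← Finset.mul_sum,
    sum_boundary_mul_eq_of_renewal hb hbB hρL1 hρbd0 hρbd (φ · 0) ht]
  ring

end RenewalSystem

theorem stmt_18_general (n : ℕ) (b : Fin (n + 1) → ℝ → ℝ) (bmin bmax : Fin (n + 1) → ℝ)
    (hb : ∀ j, Continuous (b j)) (hmin : ∀ j, 0 < bmin j)
    (hbd : ∀ j, ∀ a : ℝ, 0 ≤ a → bmin j ≤ b j a ∧ b j a ≤ bmax j)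
    (pS : Fin (n + 1) → ℝ)
    -- the solution ρ of the transport system
    (ρ : Fin (n + 1) → ℝ → ℝ → ℝ)
    (hρreg : ∀ j, Continuous (fun p : ℝ × ℝ => ρ j p.1 p.2))
    (hρL1 : ∀ j, ∀ t : ℝ, 0 ≤ t → MeasureTheory.IntegrableOn (ρ j t) (Set.Ioi (0:ℝ)))
    (hρdom : ∀ j, ∀ T : ℝ, 0 < T → ∃ g : ℝ → ℝ,
      MeasureTheory.IntegrableOn g (Set.Ioi (0:ℝ)) ∧
      ∀ t ∈ Set.Icc (0:ℝ) T, ∀ a ∈ Set.Ioi (0:ℝ), |ρ j t a| ≤ g a)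
    -- transport equation: the directional derivative along (1,1) equals -b ρ
    (hρpde : ∀ j, ∀ t : ℝ, 0 ≤ t → ∀ a : ℝ, 0 ≤ a →
      HasDerivAt (fun s => ρ j (t + s) (a + s)) (-(b j a) * ρ j t a) 0)
    -- renewal boundary condition ρ(t,0) = ∫₀^∞ K(a) ρ(t,a) da
    (hρbd0 : ∀ t : ℝ, 0 ≤ t → ρ 0 t 0 =
      ∫ a in Set.Ioi (0:ℝ), 2 * pS 0 * b 0 a * ρ 0 t a)
    (hρbd : ∀ t : ℝ, 0 ≤ t → ∀ j : Fin n, ρ j.succ t 0 =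
      ∫ a in Set.Ioi (0:ℝ),
        (2 * pS j.succ * b j.succ a * ρ j.succ t a +
          2 * (1 - pS j.castSucc) * b j.castSucc a * ρ j.castSucc t a))
    -- the eigentriple (λ*, ρ̂, φ)
    (lam : ℝ) (ρhat φ : Fin (n + 1) → ℝ → ℝ)
    (hρhatL1 : ∀ j, MeasureTheory.IntegrableOn (ρhat j) (Set.Ioi (0:ℝ)))
    (hφreg : ∀ j, Continuous (φ j))
    (hφbdd : ∀ j, ∃ C : ℝ, ∀ a : ℝ, 0 ≤ a → |φ j a| ≤ C)
    -- dual equation φ' - Bφ + Kᵀφ(0) = λ*φ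
    (hφode : ∀ j : Fin (n + 1), ∀ a : ℝ, 0 ≤ a →
      HasDerivAt (φ j)
        (lam * φ j a + b j a * φ j a - 2 * pS j * b j a * φ j 0 -
          (if h : (j : ℕ) < n then 2 * (1 - pS j) * b j a * φ (j + 1) 0 else 0)) a)
    -- normalization ⟨ρ̂, φ⟩ = 1
    (hnorm : ∑ j, ∫ a in Set.Ioi (0:ℝ), ρhat j a * φ j a = 1)
    (η : ℝ) (hη : η = ∑ j, ∫ a in Set.Ioi (0:ℝ), ρ j 0 a * φ j a) :
    ∀ t : ℝ, 0 ≤ t →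
      ∑ j, ∫ a in Set.Ioi (0:ℝ),
        (Real.exp (-(lam * t)) * ρ j t a - η * ρhat j a) * φ j a = 0 := by
  intro t ht
  choose C hC using hφbdd
  have hb0 : ∀ j a, 0 ≤ a → 0 ≤ b j a := fun j a ha => (hmin j).le.trans (hbd j a ha).1
  have hbB : ∀ j a, 0 ≤ a → |b j a| ≤ bmax j := fun j a ha =>
    (abs_of_nonneg (hb0 j a ha)).trans_le (hbd j a ha).2
  have hcont : ContinuousOn (fun s => ∑ j, ∫ a in Set.Ioi 0, ρ j s a * φ j a) (Icc 0 t) := by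
    refine continuousOn_finsetSum _ fun j _ => ?_
    obtain ⟨g, hg, hρg⟩ := hρdom j (t + 1) (by linarith)
    exact continuousOn_integral_mul_of_dominated (hρreg j) (hφreg j) (hC j) hg
      fun s hs => hρg s ⟨hs.1, by linarith [hs.2]⟩
  have hN := exp_neg_mul_mul_eq_of_hasDerivWithinAt_Ici ht hcont fun s hs =>
    hasDerivWithinAt_sum_integral_mul_of_renewal hb hb0 hbB hρreg hρL1 hρpde hρbd0 hρbd hφreg hC
      hφode hs.1
  rw [Finset.sum_congr rfl fun j _ => setIntegral_const_mul_sub_const_mul_mul _ _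
      (integrableOn_Ioi_mul_of_abs_le (hρL1 j t ht) (hφreg j) (hC j))
      (integrableOn_Ioi_mul_of_abs_le (hρhatL1 j) (hφreg j) (hC j)),
    Finset.sum_sub_distrib, ← Finset.mul_sum, ← Finset.mul_sum, hnorm, hN, hη, mul_one, sub_self]

/-- Conservation principle (general relative entropy, degree-zero invariant)
for the multilayer renewal PDE system: if `(λ*, ρ̂, φ)` is an eigentriple
(primal eigenfunction `ρ̂`, bounded dual eigenfunction `φ`, normalized by
`⟨ρ̂,φ⟩ = 1`) and `ρ` is a C¹ solution of the transport system with the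
renewal boundary condition, then the dual-weighted mass of
`h(t,a) = e^{-λ*t} ρ(t,a) - η ρ̂(a)`, `η = ⟨ρ(0,·), φ⟩`, vanishes for all
`t ≥ 0`. -/
theorem stmt_18 (n : ℕ) (b : Fin (n + 1) → ℝ → ℝ) (bmin bmax : Fin (n + 1) → ℝ)
    (hb : ∀ j, Continuous (b j)) (hmin : ∀ j, 0 < bmin j)
    (hbd : ∀ j, ∀ a : ℝ, 0 ≤ a → bmin j ≤ b j a ∧ b j a ≤ bmax j)
    (pS : Fin (n + 1) → ℝ)
    -- the solution ρ of the transport system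
    (ρ : Fin (n + 1) → ℝ → ℝ → ℝ)
    (hρreg : ∀ j, Continuous (fun p : ℝ × ℝ => ρ j p.1 p.2))
    (hρL1 : ∀ j, ∀ t : ℝ, 0 ≤ t → MeasureTheory.IntegrableOn (ρ j t) (Set.Ioi (0:ℝ)))
    (hρdom : ∀ j, ∀ T : ℝ, 0 < T → ∃ g : ℝ → ℝ,
      MeasureTheory.IntegrableOn g (Set.Ioi (0:ℝ)) ∧
      ∀ t ∈ Set.Icc (0:ℝ) T, ∀ a ∈ Set.Ioi (0:ℝ), |ρ j t a| ≤ g a)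
    -- transport equation: the directional derivative along (1,1) equals -b ρ
    (hρpde : ∀ j, ∀ t : ℝ, 0 ≤ t → ∀ a : ℝ, 0 ≤ a →
      HasDerivAt (fun s => ρ j (t + s) (a + s)) (-(b j a) * ρ j t a) 0)
    -- renewal boundary condition ρ(t,0) = ∫₀^∞ K(a) ρ(t,a) da
    (hρbd0 : ∀ t : ℝ, 0 ≤ t → ρ 0 t 0 =
      ∫ a in Set.Ioi (0:ℝ), 2 * pS 0 * b 0 a * ρ 0 t a)
    (hρbd : ∀ t : ℝ, 0 ≤ t → ∀ j : Fin n, ρ j.succ t 0 =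
      ∫ a in Set.Ioi (0:ℝ),
        (2 * pS j.succ * b j.succ a * ρ j.succ t a +
          2 * (1 - pS j.castSucc) * b j.castSucc a * ρ j.castSucc t a))
    -- the eigentriple (λ*, ρ̂, φ)
    (lam : ℝ) (ρhat φ : Fin (n + 1) → ℝ → ℝ)
    (hρhatreg : ∀ j, Continuous (ρhat j))
    (hρhatL1 : ∀ j, MeasureTheory.IntegrableOn (ρhat j) (Set.Ioi (0:ℝ)))
    (hρhatode : ∀ j, ∀ a : ℝ, 0 ≤ a →
      HasDerivAt (ρhat j) (-(lam + b j a) * ρhat j a) a)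
    (hρhatbd0 : ρhat 0 0 = ∫ a in Set.Ioi (0:ℝ), 2 * pS 0 * b 0 a * ρhat 0 a)
    (hρhatbd : ∀ j : Fin n, ρhat j.succ 0 =
      ∫ a in Set.Ioi (0:ℝ),
        (2 * pS j.succ * b j.succ a * ρhat j.succ a +
          2 * (1 - pS j.castSucc) * b j.castSucc a * ρhat j.castSucc a))
    (hφreg : ∀ j, Continuous (φ j))
    (hφbdd : ∀ j, ∃ C : ℝ, ∀ a : ℝ, 0 ≤ a → |φ j a| ≤ C)
    -- dual equation φ' - Bφ + Kᵀφ(0) = λ*φ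
    (hφode : ∀ j : Fin (n + 1), ∀ a : ℝ, 0 ≤ a →
      HasDerivAt (φ j)
        (lam * φ j a + b j a * φ j a - 2 * pS j * b j a * φ j 0 -
          (if h : (j : ℕ) < n then 2 * (1 - pS j) * b j a * φ (j + 1) 0 else 0)) a)
    -- normalization ⟨ρ̂, φ⟩ = 1
    (hnorm : ∑ j, ∫ a in Set.Ioi (0:ℝ), ρhat j a * φ j a = 1)
    (η : ℝ) (hη : η = ∑ j, ∫ a in Set.Ioi (0:ℝ), ρ j 0 a * φ j a) :
    ∀ t : ℝ, 0 ≤ t →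
      ∑ j, ∫ a in Set.Ioi (0:ℝ),
        (Real.exp (-(lam * t)) * ρ j t a - η * ρhat j a) * φ j a = 0 :=
  stmt_18_general n b bmin bmax hb hmin hbd pS ρ hρreg hρL1 hρdom hρpde hρbd0 hρbd lam ρhat φ
    hρhatL1 hφreg hφbdd hφode hnorm η hη
end
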